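/- arXiv:0906.3416 — 5 statements merged into one kernel-verified Lean document; each statement's English description precedes it below -/
import Mathlib

section
/- Let (X, T, μ) be a measure-preserving dynamical system on a probability space and let f : X → [0,∞) be Borel measurable. For r > 0 set S_r = {x ∈ X : f(x) ≤ r} and let τ(x, S_r) = min{n ∈ ℕ⁺ : Tⁿ(x) ∈ S_r} denote the hitting time. Then for μ-almost every x ∈ X, liminf_{r→0} log τ(x, S_r) / (−log r) ≥ liminf_{r→0} log μ(S_r) / log r. -/
/-!
If `μ(S_r) ≤ r^α` for small `r` and `q < β < α`, look at the scales `r_k = e^{-k}`. The event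
`τ(x, S_{r_k}) ≤ e^{kβ}` lies in `⋃_{1 ≤ n ≤ e^{kβ}} T⁻ⁿ S_{r_k}`, which by invariance has measure
`≲ e^{kβ} r_k^α = e^{-k(α-β)}`, a summable sequence. By Borel–Cantelli, a.e. `x` eventually has
`τ(x, S_{r_k}) > e^{kβ}`, and since `τ(x, S_r)` is antitone in `r` this gives
`log τ(x, S_r) / (-log r) ≥ kβ / (k + 1)` for `r ∈ [r_{k+1}, r_k]`. Letting `q` run over the
rationals below the measure exponent proves the claim.
-/

open Filter MeasureTheory Metric Set Topology ENNReal

/-- Hitting time of the set `S` for the orbit of `x` under `T`: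
`τ(x,S) = min {n ∈ ℕ⁺ : Tⁿ x ∈ S}`, equal to `⊤` if the orbit never enters `S`. -/
noncomputable def hitTime {X : Type*} (T : X → X) (S : Set X) (x : X) : ℕ∞ :=
  sInf ((fun n : ℕ => (n : ℕ∞)) '' {n : ℕ | 0 < n ∧ T^[n] x ∈ S})

section HittingTime

variable {X : Type*} {T : X → X} {S S' : Set X} {x : X}

lemma one_le_hitTime : 1 ≤ hitTime T S x := by
  refine le_sInf ?_
  rintro _ ⟨n, ⟨hn, -⟩, rfl⟩
  exact Nat.one_le_cast.2 hn

lemma hitTime_anti (h : S ⊆ S') : hitTime T S' x ≤ hitTime T S x :=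
  sInf_le_sInf (image_mono fun _ hn => ⟨hn.1, h hn.2⟩)

lemma hitTime_le_natCast_iff {N : ℕ} :
    hitTime T S x ≤ N ↔ ∃ n, 0 < n ∧ n ≤ N ∧ T^[n] x ∈ S := by
  constructor
  · intro h
    by_contra! hc
    have : ((N + 1 : ℕ) : ℕ∞) ≤ hitTime T S x := by
      refine le_sInf ?_
      rintro _ ⟨n, ⟨hn, hmem⟩, rfl⟩
      exact Nat.cast_le.2 (not_le.1 fun hnN => hc n hn hnN hmem)
    have : N + 1 ≤ N := by exact_mod_cast this.trans h
    omega
  · rintro ⟨n, hn, hnN, hmem⟩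
    refine (sInf_le ?_).trans (Nat.cast_le.2 hnN)
    exact mem_image_of_mem _ (show n ∈ {n | 0 < n ∧ T^[n] x ∈ S} from ⟨hn, hmem⟩)

variable [MeasurableSpace X] {μ : Measure X}

lemma measure_hitTime_le_natCast_le (hT : MeasurePreserving T μ μ) (hS : MeasurableSet S)
    (N : ℕ) : μ {x | hitTime T S x ≤ N} ≤ N * μ S := by
  have hsub : {x | hitTime T S x ≤ N} ⊆ ⋃ n ∈ Finset.Icc 1 N, T^[n] ⁻¹' S := by
    intro x hx
    obtain ⟨n, hn, hnN, hmem⟩ := hitTime_le_natCast_iff.1 hx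
    exact mem_biUnion (Finset.mem_Icc.2 ⟨hn, hnN⟩) hmem
  calc μ {x | hitTime T S x ≤ N} ≤ ∑ n ∈ Finset.Icc 1 N, μ (T^[n] ⁻¹' S) :=
        (measure_mono hsub).trans (measure_biUnion_finset_le _ _)
    _ = ∑ _n ∈ Finset.Icc 1 N, μ S :=
        Finset.sum_congr rfl fun n _ => (hT.iterate n).measure_preimage hS.nullMeasurableSet
    _ = N * μ S := by simp

lemma ae_eventually_natCast_lt_hitTime (hT : MeasurePreserving T μ μ) {S : ℕ → Set X}
    (hS : ∀ k, MeasurableSet (S k)) {N : ℕ → ℕ} (hsum : ∑' k, N k * μ (S k) ≠ ∞) :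
    ∀ᵐ x ∂μ, ∀ᶠ k in atTop, (N k : ℕ∞) < hitTime T (S k) x := by
  have hbad : ∑' k, μ {x | hitTime T (S k) x ≤ N k} ≠ ∞ :=
    ne_top_of_le_ne_top hsum
      (ENNReal.tsum_le_tsum fun k => measure_hitTime_le_natCast_le hT (hS k) (N k))
  filter_upwards [ae_eventually_notMem hbad] with x hx
  simpa using hx

end HittingTime

-- For `g r = τ(x, S_r)` this is the lower hitting-time indicator `R̲(x, f)`.
noncomputable def lowerGrowthExponent (g : ℝ → ℝ≥0∞) : EReal :=
  liminf (fun r : ℝ => ENNReal.log (g r) / ((-Real.log r : ℝ) : EReal)) (𝓝[>] 0)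

lemma lowerGrowthExponent_nonneg {g : ℝ → ℝ≥0∞} (hg : ∀ r, 1 ≤ g r) :
    0 ≤ lowerGrowthExponent g := by
  refine le_liminf_of_le (by isBoundedDefault) ?_
  filter_upwards [Ioo_mem_nhdsGT one_pos] with r hr
  refine EReal.div_nonneg (ENNReal.zero_le_log_iff.2 (hg r)) ?_
  exact_mod_cast neg_nonneg.2 (Real.log_nonpos hr.1.le hr.2.le)

lemma le_lowerGrowthExponent {g : ℝ → ℝ≥0∞} (hg : Antitone g) {q β : ℝ} (hq : 0 ≤ q)
    (hqβ : q < β) (h : ∀ᶠ k : ℕ in atTop, ENNReal.ofReal (Real.exp (k * β)) ≤ g (Real.exp (-k))) :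
    (q : EReal) ≤ lowerGrowthExponent g := by
  have hlin : ∀ᶠ k : ℕ in atTop, q * (k + 1) ≤ k * β := by
    filter_upwards [tendsto_natCast_atTop_atTop.eventually_ge_atTop (q / (β - q))] with k hk
    rw [div_le_iff₀ (sub_pos.2 hqβ)] at hk
    linarith
  obtain ⟨K, hK⟩ := eventually_atTop.1 (h.and hlin)
  refine le_liminf_of_le (by isBoundedDefault) ?_
  filter_upwards [Ioo_mem_nhdsGT (Real.exp_pos (-K))] with r ⟨hr0, hrK⟩
  have hlogr : (K : ℝ) < -Real.log r := by
    rw [lt_neg, ← Real.log_exp (-K)]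
    exact Real.log_lt_log hr0 hrK
  set k := ⌊-Real.log r⌋₊
  have hKk : K ≤ k := Nat.le_floor hlogr.le
  have hrk : r ≤ Real.exp (-k) := by
    rw [← Real.exp_log hr0, Real.exp_le_exp, le_neg]
    exact Nat.floor_le (by linarith)
  have hgr : ENNReal.ofReal (Real.exp (k * β)) ≤ g r := (hK k hKk).1.trans (hg hrk)
  have hlog_gr : ((k * β : ℝ) : EReal) ≤ ENNReal.log (g r) := by
    simpa [ENNReal.log_ofReal_of_pos (Real.exp_pos _)] using ENNReal.log_monotone hgr
  rw [EReal.le_div_iff_mul_le (by exact_mod_cast (Nat.cast_nonneg K).trans_lt hlogr)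
    (EReal.coe_ne_top _), ← EReal.coe_mul]
  refine le_trans ?_ hlog_gr
  have : -Real.log r < k + 1 := Nat.lt_floor_add_one _
  exact_mod_cast (mul_le_mul_of_nonneg_left this.le hq).trans (hK k hKk).2

lemma ENNReal.le_ofReal_rpow_of_lt_log_div_log {m : ℝ≥0∞} {r α : ℝ} (hr0 : 0 < r) (hr1 : r < 1)
    (h : (α : EReal) < ENNReal.log m / (Real.log r : EReal)) : m ≤ ENNReal.ofReal (r ^ α) := by
  by_contra! hlt
  have hlogr : Real.log r < 0 := Real.log_neg hr0 hr1
  have : ((α * Real.log r : ℝ) : EReal) < ENNReal.log m := by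
    rw [← Real.log_rpow hr0, ← ENNReal.log_ofReal_of_pos (Real.rpow_pos_of_pos hr0 α)]
    exact ENNReal.log_lt_log hlt
  have := EReal.div_lt_div_right_of_neg (by exact_mod_cast hlogr) (EReal.coe_ne_bot _) this
  rw [← EReal.coe_div, mul_div_cancel_right₀ _ hlogr.ne] at this
  exact lt_asymm h this

lemma eventually_le_ofReal_rpow_of_lt_liminf {m : ℝ → ℝ≥0∞} {α : ℝ}
    (h : (α : EReal) < liminf (fun r : ℝ => ENNReal.log (m r) / (Real.log r : EReal)) (𝓝[>] 0)) :
    ∀ᶠ r in 𝓝[>] 0, m r ≤ ENNReal.ofReal (r ^ α) := by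
  filter_upwards [eventually_lt_of_lt_liminf h, Ioo_mem_nhdsGT one_pos] with r hα hr
  exact ENNReal.le_ofReal_rpow_of_lt_log_div_log hr.1 hr.2 hα

lemma tsum_natCeil_exp_mul_ne_top {a : ℕ → ℝ≥0∞} {α β : ℝ} (hβ : 0 ≤ β) (hβα : β < α)
    (k₀ : ℕ) (ha : ∀ k ≥ k₀, a k ≤ ENNReal.ofReal (Real.exp (-(k * α)))) :
    ∑' k, (⌈Real.exp ((k + k₀ : ℕ) * β)⌉₊ : ℝ≥0∞) * a (k + k₀) ≠ ∞ := by
  set c := Real.exp (β - α)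
  have hc : c < 1 := Real.exp_lt_one_iff.2 (sub_neg.2 hβα)
  have hterm : ∀ k, (⌈Real.exp ((k + k₀ : ℕ) * β)⌉₊ : ℝ≥0∞) * a (k + k₀)
      ≤ ENNReal.ofReal (2 * c ^ k) := by
    intro k
    set m : ℕ := k + k₀
    have hceil : (⌈Real.exp (m * β)⌉₊ : ℝ≥0∞) ≤ ENNReal.ofReal (2 * Real.exp (m * β)) := by
      rw [← ENNReal.ofReal_natCast]
      refine ENNReal.ofReal_le_ofReal (Nat.ceil_le_two_mul ?_)
      linarith [Real.one_le_exp (mul_nonneg m.cast_nonneg hβ)]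
    calc _ ≤ ENNReal.ofReal (2 * Real.exp (m * β)) * ENNReal.ofReal (Real.exp (-(m * α))) :=
          mul_le_mul' hceil (ha m le_add_self)
      _ = ENNReal.ofReal (2 * c ^ m) := by
          rw [← ENNReal.ofReal_mul (by positivity), ← Real.exp_nat_mul, mul_assoc,
            ← Real.exp_add]
          ring_nf
      _ ≤ ENNReal.ofReal (2 * c ^ k) := by
          refine ENNReal.ofReal_le_ofReal (mul_le_mul_of_nonneg_left ?_ two_pos.le)
          exact pow_le_pow_of_le_one (Real.exp_pos _).le hc.le le_self_add
  refine ne_top_of_le_ne_top ?_ (ENNReal.tsum_le_tsum hterm)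
  rw [← ENNReal.ofReal_tsum_of_nonneg (fun k => by positivity)
    ((summable_geometric_of_lt_one (Real.exp_pos _).le hc).mul_left 2)]
  exact ENNReal.ofReal_ne_top

theorem ae_le_lowerGrowthExponent_hitTime {X : Type*} [MeasurableSpace X] {μ : Measure X}
    {T : X → X} (hT : MeasurePreserving T μ μ) {S : ℝ → Set X} (hS : ∀ r, MeasurableSet (S r))
    (hS_mono : Monotone S) {q α : ℝ} (hq : 0 ≤ q) (hqα : q < α)
    (hα : ∀ᶠ r in 𝓝[>] 0, μ (S r) ≤ ENNReal.ofReal (r ^ α)) :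
    ∀ᵐ x ∂μ, (q : EReal) ≤ lowerGrowthExponent (fun r => hitTime T (S r) x) := by
  have hexp : Tendsto (fun k : ℕ => Real.exp (-k)) atTop (𝓝[>] 0) :=
    tendsto_nhdsWithin_iff.2 ⟨Real.tendsto_exp_neg_atTop_nhds_zero.comp
      tendsto_natCast_atTop_atTop, .of_forall fun _ => Real.exp_pos _⟩
  obtain ⟨k₀, hk₀⟩ := eventually_atTop.1 (hexp.eventually hα)
  obtain ⟨β, hqβ, hβα⟩ := exists_between hqα
  have hsum := tsum_natCeil_exp_mul_ne_top (a := fun k => μ (S (Real.exp (-k))))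
    (hq.trans hqβ.le) hβα k₀ fun k hk => by simpa only [← Real.exp_mul, neg_mul] using hk₀ k hk
  filter_upwards [ae_eventually_natCast_lt_hitTime hT (fun _ => hS _) hsum] with x hx
  refine le_lowerGrowthExponent
    (fun r r' hrr' => ENat.toENNReal_mono (hitTime_anti (hS_mono hrr'))) hq hqβ ?_
  rw [← map_add_atTop_eq_nat k₀, eventually_map]
  filter_upwards [hx] with k hk
  calc ENNReal.ofReal (Real.exp ((k + k₀ : ℕ) * β))
      ≤ (⌈Real.exp ((k + k₀ : ℕ) * β)⌉₊ : ℝ≥0∞) := by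
        rw [← ENNReal.ofReal_natCast]; exact ENNReal.ofReal_le_ofReal (Nat.le_ceil _)
    _ ≤ _ := by rw [← ENat.toENNReal_coe]; exact ENat.toENNReal_mono hk.le

lemma EReal.le_of_forall_rat_lt_imp_le_of_nonneg {a b : EReal} (hb : 0 ≤ b)
    (h : ∀ q : ℚ, 0 ≤ (q : ℝ) → ((q : ℝ) : EReal) < a → ((q : ℝ) : EReal) ≤ b) : a ≤ b := by
  by_contra! hba
  obtain ⟨q, hbq, hqa⟩ := EReal.exists_rat_btwn_of_lt hba
  exact (h q (by exact_mod_cast hb.trans hbq.le) hqa).not_gt hbq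

theorem hitting_liminf_ge_liminf_dim_general
    {X : Type*} [MeasurableSpace X] (μ : Measure X)
    (T : X → X) (hT : MeasurePreserving T μ μ)
    (f : X → ℝ) (hf : Measurable f) :
    ∀ᵐ x ∂μ,
      liminf (fun r : ℝ =>
          ENNReal.log ((hitTime T {y | f y ≤ r} x : ℝ≥0∞)) / ((- Real.log r : ℝ) : EReal))
        (𝓝[>] 0)
      ≥ liminf (fun r : ℝ =>
          ENNReal.log (μ {y | f y ≤ r}) / ((Real.log r : ℝ) : EReal)) (𝓝[>] 0) := by
  set L := liminf (fun r : ℝ => ENNReal.log (μ {y | f y ≤ r}) / ((Real.log r : ℝ) : EReal))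
    (𝓝[>] 0)
  have h_rat : ∀ q : {q : ℚ // 0 ≤ (q : ℝ) ∧ ((q : ℝ) : EReal) < L},
      ∀ᵐ x ∂μ, ((q : ℝ) : EReal) ≤ lowerGrowthExponent fun r => hitTime T {y | f y ≤ r} x := by
    rintro ⟨q, hq, hqL⟩
    obtain ⟨α, hqα, hαL⟩ := EReal.exists_rat_btwn_of_lt hqL
    exact ae_le_lowerGrowthExponent_hitTime hT (fun _ => hf measurableSet_Iic)
      (fun _ _ h _ hy => le_trans hy h) hq (EReal.coe_lt_coe_iff.1 hqα)
      (eventually_le_ofReal_rpow_of_lt_liminf hαL)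
  filter_upwards [ae_all_iff.2 h_rat] with x hx
  refine EReal.le_of_forall_rat_lt_imp_le_of_nonneg
    (lowerGrowthExponent_nonneg fun _ => ?_) fun q hq hqL => hx ⟨q, hq, hqL⟩
  simpa using ENat.toENNReal_mono one_le_hitTime

/-- In a measure-preserving system on a probability space, for a measurable
`f : X → [0,∞)` with sublevel sets `S_r = {x : f x ≤ r}`, for `μ`-a.e. `x` one has
`liminf_{r→0} log τ(x,S_r)/(-log r) ≥ liminf_{r→0} log μ(S_r)/log r`. -/
theorem hitting_liminf_ge_liminf_dim
    {X : Type*} [MeasurableSpace X] (μ : Measure X) [IsProbabilityMeasure μ]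
    (T : X → X) (hT : MeasurePreserving T μ μ)
    (f : X → ℝ) (hf : Measurable f) (hf0 : ∀ x, 0 ≤ f x) :
    ∀ᵐ x ∂μ,
      liminf (fun r : ℝ =>
          ENNReal.log ((hitTime T {y | f y ≤ r} x : ℝ≥0∞)) / ((- Real.log r : ℝ) : EReal))
        (𝓝[>] 0)
      ≥ liminf (fun r : ℝ =>
          ENNReal.log (μ {y | f y ≤ r}) / ((Real.log r : ℝ) : EReal)) (𝓝[>] 0) :=
  hitting_liminf_ge_liminf_dim_general μ T hT f hf
end

section
/- Let (X, T, μ) be a measure-preserving dynamical system on a probability space and let f : X → [0,∞) be Borel measurable. For r > 0 set S_r = {x ∈ X : f(x) ≤ r} and let τ(x, S_r) = min{n ∈ ℕ⁺ : Tⁿ(x) ∈ S_r} denote the hitting time. Then for μ-almost every x ∈ X, limsup_{r→0} log τ(x, S_r) / (−log r) ≥ limsup_{r→0} log μ(S_r) / log r. -/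
open Filter MeasureTheory Metric Set Topology ENNReal

/-! `{x | τ(x, S) ≤ n}` is covered by the preimages `T⁻ʲ S`, `1 ≤ j ≤ n`, so its measure is at
most `n μ(S)`. If `q < a < d̄(f)`, there are radii `r_k < 2⁻ᵏ` with `μ(S_{r_k}) < r_kᵃ`; for
`n_k = ⌊r_k⁻ᵠ⌋` the sets `{τ(·, S_{r_k}) ≤ n_k}` then have measure at most
`r_k^(a-q) ≤ 2^(-k(a-q))`, so by Borel–Cantelli almost every `x` has `τ(x, S_{r_k}) > r_k⁻ᵠ` for
all large `k`, whence `R̄(x, f) ≥ q`. Letting `q` run through the rationals below `d̄(f)` gives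
the claim. -/

lemma ENNReal.lt_ofReal_rpow_of_lt_log_div_log {m : ℝ≥0∞} {r a : ℝ} (hr0 : 0 < r) (hr1 : r < 1)
    (h : (a : EReal) < ENNReal.log m / (Real.log r : EReal)) : m < ENNReal.ofReal r ^ a := by
  have hlog : Real.log r < 0 := Real.log_neg hr0 hr1
  rw [← ENNReal.log_lt_log_iff, ENNReal.log_rpow, ENNReal.log_ofReal_of_pos hr0]
  by_contra! hle
  have := EReal.div_le_div_right_of_nonpos (c := (Real.log r : EReal))
    (by exact_mod_cast hlog.le) hle
  rw [← EReal.coe_mul, ← EReal.coe_div, mul_div_cancel_right₀ _ hlog.ne] at this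
  exact h.not_ge this

lemma ENNReal.coe_le_log_div_neg_log_of_rpow_le {t : ℝ≥0∞} {r q : ℝ} (hr0 : 0 < r) (hr1 : r < 1)
    (h : ENNReal.ofReal r ^ (-q) ≤ t) :
    (q : EReal) ≤ ENNReal.log t / ((-Real.log r : ℝ) : EReal) := by
  have hpos : 0 < -Real.log r := neg_pos.mpr (Real.log_neg hr0 hr1)
  rw [EReal.le_div_iff_mul_le (by exact_mod_cast hpos) (EReal.coe_ne_top _)]
  calc (q : EReal) * ((-Real.log r : ℝ) : EReal) = ENNReal.log (ENNReal.ofReal r ^ (-q)) := by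
        rw [ENNReal.log_rpow, ENNReal.log_ofReal_of_pos hr0, ← EReal.coe_mul, ← EReal.coe_mul]
        congr 1; ring
    _ ≤ ENNReal.log t := ENNReal.log_monotone h

lemma ENNReal.ofReal_le_of_floor_lt {y : ℝ} {t : ℕ∞} (h : (⌊y⌋₊ : ℕ∞) < t) :
    ENNReal.ofReal y ≤ t :=
  calc ENNReal.ofReal y ≤ ((⌊y⌋₊ + 1 : ℕ) : ℝ≥0∞) := by
        rw [← ENNReal.ofReal_natCast]
        exact ENNReal.ofReal_le_ofReal (by push_cast; exact (Nat.lt_floor_add_one y).le)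
    _ = (((⌊y⌋₊ + 1 : ℕ) : ℕ∞) : ℝ≥0∞) := by simp
    _ ≤ t := ENat.toENNReal_le.mpr (by exact_mod_cast Order.add_one_le_of_lt h)

lemma ENNReal.floor_rpow_neg_mul_rpow_le {r : ℝ} (hr : 0 < r) (q a : ℝ) :
    (⌊r ^ (-q)⌋₊ : ℝ≥0∞) * ENNReal.ofReal r ^ a ≤ ENNReal.ofReal r ^ (a - q) :=
  calc (⌊r ^ (-q)⌋₊ : ℝ≥0∞) * ENNReal.ofReal r ^ a
      ≤ ENNReal.ofReal r ^ (-q) * ENNReal.ofReal r ^ a := by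
        gcongr
        rw [ENNReal.ofReal_rpow_of_pos hr, ← ENNReal.ofReal_natCast]
        exact ENNReal.ofReal_le_ofReal (Nat.floor_le (by positivity))
    _ = ENNReal.ofReal r ^ (a - q) := by
        rw [← ENNReal.rpow_add _ _ (ENNReal.ofReal_pos.mpr hr).ne' ENNReal.ofReal_ne_top,
          neg_add_eq_sub]

section HitTime

variable {X : Type*} {T : X → X} {S : Set X} {x : X}

lemma hitTime_le_iff {n : ℕ} : hitTime T S x ≤ n ↔ ∃ j, 0 < j ∧ j ≤ n ∧ T^[j] x ∈ S := by
  rw [← ENat.lt_add_one_iff (ENat.natCast_ne_top n), hitTime, sInf_lt_iff]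
  simp only [mem_image, ENat.lt_add_one_iff (ENat.natCast_ne_top n)]
  constructor
  · rintro ⟨_, ⟨j, ⟨hj0, hjS⟩, rfl⟩, hjn⟩
    exact ⟨j, hj0, Nat.cast_le.mp hjn, hjS⟩
  · rintro ⟨j, hj0, hjn, hjS⟩
    exact ⟨j, ⟨j, ⟨hj0, hjS⟩, rfl⟩, Nat.cast_le.mpr hjn⟩

lemma measure_hitTime_le_le [MeasurableSpace X] {μ : Measure X}
    (hT : MeasurePreserving T μ μ) (hS : MeasurableSet S) (n : ℕ) :
    μ {x | hitTime T S x ≤ n} ≤ n * μ S := by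
  have hsub : {x | hitTime T S x ≤ n} ⊆ ⋃ j ∈ Finset.Icc 1 n, T^[j] ⁻¹' S := fun x hx ↦ by
    obtain ⟨j, hj0, hjn, hjS⟩ := hitTime_le_iff.mp hx
    exact mem_biUnion (Finset.mem_Icc.mpr ⟨hj0, hjn⟩) hjS
  calc μ {x | hitTime T S x ≤ n} ≤ ∑ j ∈ Finset.Icc 1 n, μ (T^[j] ⁻¹' S) :=
        (measure_mono hsub).trans (measure_biUnion_finset_le _ _)
    _ = n * μ S := by
        simp [(hT.iterate _).measure_preimage hS.nullMeasurableSet]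

lemma ae_eventually_lt_hitTime [MeasurableSpace X] {μ : Measure X}
    (hT : MeasurePreserving T μ μ) {S : ℕ → Set X} (hS : ∀ k, MeasurableSet (S k)) (n : ℕ → ℕ)
    (hsum : ∑' k, (n k : ℝ≥0∞) * μ (S k) ≠ ∞) :
    ∀ᵐ x ∂μ, ∀ᶠ k in atTop, (n k : ℕ∞) < hitTime T (S k) x := by
  have hbad : ∑' k, μ {x | hitTime T (S k) x ≤ n k} ≠ ∞ :=
    ne_top_of_le_ne_top hsum (ENNReal.tsum_le_tsum fun k ↦ measure_hitTime_le_le hT (hS k) (n k))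
  filter_upwards [ae_eventually_notMem hbad] with x hx
  filter_upwards [hx] with k hk using not_le.mp hk

lemma ae_le_limsup_log_hitTime_of_frequently [MeasurableSpace X] {μ : Measure X}
    (hT : MeasurePreserving T μ μ) {f : X → ℝ} (hf : Measurable f) {q a : ℝ}
    (hqa : q < a)
    (hfreq : ∃ᶠ r in 𝓝[>] 0, (a : EReal) < ENNReal.log (μ {y | f y ≤ r}) / (Real.log r : EReal)) :
    ∀ᵐ x ∂μ, (q : EReal) ≤ limsup (fun r : ℝ =>
        ENNReal.log (hitTime T {y | f y ≤ r} x : ℝ≥0∞) / ((-Real.log r : ℝ) : EReal)) (𝓝[>] 0) := by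
  choose r hra hr using fun k : ℕ ↦
    (hfreq.and_eventually (Ioo_mem_nhdsGT (by positivity : (0 : ℝ) < (1 / 2) ^ k))).exists
  have hr1 (k : ℕ) : r k < 1 := (hr k).2.trans_le (pow_le_one₀ (by norm_num) (by norm_num))
  have hr_tendsto : Tendsto r atTop (𝓝[>] 0) :=
    tendsto_nhdsWithin_of_tendsto_nhds_of_eventually_within _
      (squeeze_zero (fun k ↦ (hr k).1.le) (fun k ↦ (hr k).2.le)
        (tendsto_pow_atTop_nhds_zero_of_lt_one (by norm_num) (by norm_num)))
      (.of_forall fun k ↦ (hr k).1)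
  have hsum : ∑' k, (⌊r k ^ (-q)⌋₊ : ℝ≥0∞) * μ {y | f y ≤ r k} ≠ ∞ := by
    refine ne_top_of_le_ne_top (tsum_geometric_lt_top.mpr
      (ENNReal.rpow_lt_one (by norm_num : (2 : ℝ≥0∞)⁻¹ < 1) (sub_pos.mpr hqa))).ne
      (ENNReal.tsum_le_tsum fun k ↦ ?_)
    calc (⌊r k ^ (-q)⌋₊ : ℝ≥0∞) * μ {y | f y ≤ r k}
        ≤ ⌊r k ^ (-q)⌋₊ * ENNReal.ofReal (r k) ^ a := by
          gcongr
          exact (ENNReal.lt_ofReal_rpow_of_lt_log_div_log (hr k).1 (hr1 k) (hra k)).le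
      _ ≤ ENNReal.ofReal (r k) ^ (a - q) := ENNReal.floor_rpow_neg_mul_rpow_le (hr k).1 q a
      _ ≤ ENNReal.ofReal ((1 / 2) ^ k) ^ (a - q) := by gcongr; exact (hr k).2.le
      _ = (2⁻¹ ^ (a - q)) ^ k := by
          rw [ENNReal.ofReal_pow (by norm_num), ← ENNReal.rpow_natCast_mul, mul_comm,
            ENNReal.rpow_mul_natCast, one_div, ENNReal.ofReal_inv_of_pos two_pos,
            ENNReal.ofReal_ofNat]
  filter_upwards [ae_eventually_lt_hitTime hT (fun k ↦ hf measurableSet_Iic) _ hsum] with x hx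
  refine le_limsup_of_frequently_le (hr_tendsto.frequently (hx.mono fun k hk ↦ ?_).frequently)
  refine ENNReal.coe_le_log_div_neg_log_of_rpow_le (hr k).1 (hr1 k) ?_
  rw [ENNReal.ofReal_rpow_of_pos (hr k).1]
  exact ENNReal.ofReal_le_of_floor_lt hk

end HitTime

theorem hitting_limsup_ge_limsup_dim_general
    {X : Type*} [MeasurableSpace X] (μ : Measure X)
    (T : X → X) (hT : MeasurePreserving T μ μ)
    (f : X → ℝ) (hf : Measurable f) :
    ∀ᵐ x ∂μ,
      limsup (fun r : ℝ =>
          ENNReal.log ((hitTime T {y | f y ≤ r} x : ℝ≥0∞)) / ((- Real.log r : ℝ) : EReal))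
        (𝓝[>] 0)
      ≥ limsup (fun r : ℝ =>
          ENNReal.log (μ {y | f y ≤ r}) / ((Real.log r : ℝ) : EReal)) (𝓝[>] 0) := by
  set L := limsup (fun r : ℝ =>
    ENNReal.log (μ {y | f y ≤ r}) / ((Real.log r : ℝ) : EReal)) (𝓝[>] 0)
  have hrat : ∀ᵐ x ∂μ, ∀ q : {q : ℚ // ((q : ℝ) : EReal) < L}, ((q : ℝ) : EReal) ≤ limsup
      (fun r : ℝ => ENNReal.log (hitTime T {y | f y ≤ r} x : ℝ≥0∞) / ((-Real.log r : ℝ) : EReal))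
      (𝓝[>] 0) := by
    rw [ae_all_iff]
    rintro ⟨q, hqL⟩
    obtain ⟨a, hqa, haL⟩ := EReal.exists_rat_btwn_of_lt hqL
    exact ae_le_limsup_log_hitTime_of_frequently hT hf (EReal.coe_lt_coe_iff.mp hqa)
      (frequently_lt_of_lt_limsup (by isBoundedDefault) haL)
  filter_upwards [hrat] with x hx
  by_contra! hlt
  obtain ⟨q, hHq, hqL⟩ := EReal.exists_rat_btwn_of_lt hlt
  exact (hx ⟨q, hqL⟩).not_gt hHq

/-- In a measure-preserving system on a probability space, for a measurable
`f : X → [0,∞)` with sublevel sets `S_r = {x : f x ≤ r}`, for `μ`-a.e. `x` one has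
`limsup_{r→0} log τ(x,S_r)/(-log r) ≥ limsup_{r→0} log μ(S_r)/log r`. -/
theorem hitting_limsup_ge_limsup_dim
    {X : Type*} [MeasurableSpace X] (μ : Measure X) [IsProbabilityMeasure μ]
    (T : X → X) (hT : MeasurePreserving T μ μ)
    (f : X → ℝ) (hf : Measurable f) (hf0 : ∀ x, 0 ≤ f x) :
    ∀ᵐ x ∂μ,
      limsup (fun r : ℝ =>
          ENNReal.log ((hitTime T {y | f y ≤ r} x : ℝ≥0∞)) / ((- Real.log r : ℝ) : EReal))
        (𝓝[>] 0)
      ≥ limsup (fun r : ℝ =>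
          ENNReal.log (μ {y | f y ≤ r}) / ((Real.log r : ℝ) : EReal)) (𝓝[>] 0) :=
  hitting_limsup_ge_limsup_dim_general μ T hT f hf
end

section
/- Let (X, d) be a metric space, μ a Borel probability measure, and T : X → X a measure-preserving map with superpolynomial decay of correlations with respect to Lipschitz observables: there is Φ : ℕ → [0,∞) with n^α Φ(n) → 0 for every α > 0 such that |∫ φ∘Tⁿ · ψ dμ − ∫φ dμ ∫ψ dμ| ≤ ‖φ‖·‖ψ‖·Φ(n) for all Lipschitz φ, ψ : X → ℝ, where ‖·‖ denotes the Lipschitz norm (sup norm plus best Lipschitz constant). Let f : X → [0,∞) be ℓ-Lipschitz, let (r_n) be a strictly decreasing sequence of positive reals tending to 0, set S_{r_n} = {x : f(x) ≤ r_n} and A_k = T^{−k}(S_{r_k}). Then there exists N such that for all k > j > N: μ(A_k ∩ A_j) ≤ μ(S_{r_{k−1}})·μ(S_{r_{j−1}}) + 4ℓ²·Φ(k−j) / ((r_{k−1}−r_k)(r_{j−1}−r_j)). -/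
/-!
Squeeze the indicators of `{f ≤ r k}` and `{f ≤ r j}` under the Lipschitz cutoffs
`ramp (r k) (r (k - 1)) ∘ f` and `ramp (r j) (r (j - 1)) ∘ f`, which lie below the indicators of
`{f ≤ r (k - 1)}` and `{f ≤ r (j - 1)}` and have Lipschitz norm at most `1 + ℓ / Δ`, where
`Δ = r (m - 1) - r m` is the gap. By invariance of `μ`, `μ (A k ∩ A j)` is at most the correlation
of the two cutoffs at time `k - j`, which decay of correlations bounds by the product of their
integrals plus the error term. The gaps tend to `0`, so eventually `Δ ≤ ℓ` and `1 + ℓ / Δ ≤ 2ℓ / Δ`.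
If `ℓ = 0` then `f` is constant and every sublevel set is empty or everything.
-/

open Filter MeasureTheory Set Topology NNReal

/-- `C + K` bounds the Lipschitz norm `‖φ‖∞ + Lip φ` of an observable. -/
def HasLipschitzDecayOfCorrelations {X : Type*} [MetricSpace X] [MeasurableSpace X]
    (μ : Measure X) (T : X → X) (Φ : ℕ → ℝ) : Prop :=
  ∀ (φ ψ : X → ℝ) (Kφ Kψ : ℝ≥0) (Cφ Cψ : ℝ),
    LipschitzWith Kφ φ → LipschitzWith Kψ ψ →
    (∀ x, |φ x| ≤ Cφ) → (∀ x, |ψ x| ≤ Cψ) → ∀ n : ℕ,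
    |(∫ x, φ (T^[n] x) * ψ x ∂μ) - (∫ x, φ x ∂μ) * ∫ x, ψ x ∂μ|
      ≤ (Cφ + Kφ) * (Cψ + Kψ) * Φ n

section Ramp

noncomputable def ramp (a b t : ℝ) : ℝ :=
  max 0 (min 1 ((b - t) / (b - a)))

variable {a b t : ℝ}

lemma ramp_nonneg : 0 ≤ ramp a b t :=
  le_max_left _ _

lemma ramp_le_one : ramp a b t ≤ 1 :=
  max_le zero_le_one (min_le_left _ _)

lemma abs_ramp_le_one : |ramp a b t| ≤ 1 :=
  abs_le.2 ⟨by linarith [ramp_nonneg (a := a) (b := b) (t := t)], ramp_le_one⟩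

lemma ramp_eq_one (hab : a < b) (ht : t ≤ a) : ramp a b t = 1 := by
  have : 1 ≤ (b - t) / (b - a) := (one_le_div (by linarith)).2 (by linarith)
  rw [ramp, min_eq_left this, max_eq_right zero_le_one]

lemma ramp_eq_zero (hab : a ≤ b) (ht : b < t) : ramp a b t = 0 :=
  max_eq_left <| (min_le_right _ _).trans <|
    div_nonpos_of_nonpos_of_nonneg (by linarith) (by linarith)

lemma lipschitzWith_ramp (hab : a ≤ b) : LipschitzWith (b - a).toNNReal⁻¹ (ramp a b) := by
  have hlin : LipschitzWith (b - a).toNNReal⁻¹ fun t => (b - t) / (b - a) := by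
    refine LipschitzWith.of_dist_le_mul fun t s => ?_
    have hts : (b - t) - (b - s) = -(t - s) := by ring
    rw [NNReal.coe_inv, Real.coe_toNNReal _ (sub_nonneg.2 hab), Real.dist_eq, Real.dist_eq,
      div_sub_div_same, hts, abs_div, abs_neg, abs_of_nonneg (sub_nonneg.2 hab), div_eq_inv_mul]
  exact (hlin.const_min 1).const_max 0

end Ramp

section Integrals

variable {X : Type*} [MeasurableSpace X] {μ : Measure X}

lemma measureReal_le_integral_of_indicator_le [IsFiniteMeasure μ] {s : Set X} {u : X → ℝ}
    (hs : MeasurableSet s) (hu : Integrable u μ) (h : s.indicator 1 ≤ u) :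
    μ.real s ≤ ∫ x, u x ∂μ := by
  rw [← integral_indicator_one hs]
  exact integral_mono ((integrable_const 1).indicator hs) hu h

lemma integral_le_measureReal_of_le_indicator [IsFiniteMeasure μ] {s : Set X} {u : X → ℝ}
    (hs : MeasurableSet s) (hu : Integrable u μ) (h : u ≤ s.indicator 1) :
    ∫ x, u x ∂μ ≤ μ.real s := by
  rw [← integral_indicator_one hs]
  exact integral_mono hu ((integrable_const 1).indicator hs) h

lemma integrable_ramp_comp_mul_ramp_comp [IsFiniteMeasure μ] {g h : X → ℝ} (hg : Measurable g)
    (hh : Measurable h) (a b c d : ℝ) :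
    Integrable (fun x => ramp a b (g x) * ramp c d (h x)) μ := by
  refine Integrable.of_bound (by unfold ramp; fun_prop) 1 (ae_of_all _ fun x => ?_)
  rw [Real.norm_eq_abs, abs_mul]
  exact mul_le_one₀ abs_ramp_le_one (abs_nonneg _) abs_ramp_le_one

lemma integrable_ramp_comp [IsFiniteMeasure μ] {g : X → ℝ} (hg : Measurable g) (a b : ℝ) :
    Integrable (fun x => ramp a b (g x)) μ := by
  simpa [ramp_eq_one zero_lt_one le_rfl] using
    integrable_ramp_comp_mul_ramp_comp (μ := μ) hg (measurable_const (a := (0 : ℝ))) a b 0 1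

lemma measureReal_preimage_sublevel_inter_le_of_const [IsProbabilityMeasure μ] {f : X → ℝ}
    (hf : ∀ x y, f x = f y) (g : X → X) (s : Set X) {a b c : ℝ} (hab : a ≤ b) (hac : a ≤ c) :
    μ.real (g ⁻¹' {x | f x ≤ a} ∩ s) ≤ μ.real {x | f x ≤ b} * μ.real {x | f x ≤ c} := by
  by_cases h : ∃ y, f y ≤ a
  · obtain ⟨y, hy⟩ := h
    have huniv : ∀ e, a ≤ e → {x | f x ≤ e} = univ := fun e he =>
      eq_univ_of_forall fun x => (hf x y).trans_le (hy.trans he)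
    rw [huniv b hab, huniv c hac, probReal_univ, one_mul]
    exact measureReal_le_one
  · simp only [not_exists, not_le] at h
    have : {x | f x ≤ a} = ∅ := eq_empty_of_forall_notMem fun x hx => (h x).not_ge hx
    rw [this, preimage_empty, empty_inter, measureReal_empty]
    positivity

end Integrals

lemma MeasureTheory.MeasurePreserving.measure_iterate_preimage_inter {X : Type*}
    [MeasurableSpace X] {μ : Measure X} {T : X → X} (hT : MeasurePreserving T μ μ)
    {s t : Set X} (hs : MeasurableSet s) (ht : MeasurableSet t) {j k : ℕ} (hjk : j ≤ k) :
    μ (T^[k] ⁻¹' s ∩ T^[j] ⁻¹' t) = μ (T^[k - j] ⁻¹' s ∩ t) := by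
  have hsplit : T^[k] = T^[k - j] ∘ T^[j] := by
    rw [← Function.iterate_add, Nat.sub_add_cancel hjk]
  rw [hsplit, preimage_comp, ← preimage_inter]
  exact (hT.iterate j).measure_preimage
    ((hT.measurable.iterate _ hs).inter ht).nullMeasurableSet

section Sublevel

variable {X : Type*} [MetricSpace X] [MeasurableSpace X] [BorelSpace X]
  {μ : Measure X} [IsFiniteMeasure μ] {f : X → ℝ} {ℓ : ℝ≥0}

lemma integral_ramp_comp_le_measureReal (hf : Continuous f) {a b : ℝ} (hab : a ≤ b) :
    ∫ x, ramp a b (f x) ∂μ ≤ μ.real {x | f x ≤ b} := by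
  refine integral_le_measureReal_of_le_indicator
    (measurableSet_le hf.measurable measurable_const) (integrable_ramp_comp hf.measurable a b)
    fun x => ?_
  by_cases hx : f x ≤ b
  · simpa [indicator_of_mem (show x ∈ {x | f x ≤ b} from hx)] using ramp_le_one
  · simp [indicator_of_notMem (show x ∉ {x | f x ≤ b} from hx), ramp_eq_zero hab (not_le.1 hx)]

theorem measureReal_iterate_preimage_sublevel_inter_le
    {T : X → X} {Φ : ℕ → ℝ} (hmix : HasLipschitzDecayOfCorrelations μ T Φ) (hT : Measurable T)
    (hf : LipschitzWith ℓ f) {a b c d : ℝ} (hab : a < b) (hcd : c < d) (n : ℕ) :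
    μ.real (T^[n] ⁻¹' {x | f x ≤ a} ∩ {x | f x ≤ c})
      ≤ μ.real {x | f x ≤ b} * μ.real {x | f x ≤ d}
        + (1 + ℓ / (b - a)) * (1 + ℓ / (d - c)) * Φ n := by
  have hfm := hf.continuous.measurable
  have hTn := hT.iterate n
  have hφ := (lipschitzWith_ramp hab.le).comp hf
  have hψ := (lipschitzWith_ramp hcd.le).comp hf
  have hnorm : ∀ {a b : ℝ}, a < b → 1 + (((b - a).toNNReal⁻¹ * ℓ : ℝ≥0) : ℝ) = 1 + ℓ / (b - a) :=
    fun h => by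
      rw [NNReal.coe_mul, NNReal.coe_inv, Real.coe_toNNReal _ (sub_nonneg.2 h.le),
        div_eq_inv_mul]
  have hcorr := hmix _ _ _ _ 1 1 hφ hψ (fun _ => abs_ramp_le_one) (fun _ => abs_ramp_le_one) n
  rw [hnorm hab, hnorm hcd, abs_le] at hcorr
  have hsmooth : μ.real (T^[n] ⁻¹' {x | f x ≤ a} ∩ {x | f x ≤ c})
      ≤ ∫ x, ramp a b (f (T^[n] x)) * ramp c d (f x) ∂μ := by
    refine measureReal_le_integral_of_indicator_le
      ((hTn (measurableSet_le hfm measurable_const)).inter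
        (measurableSet_le hfm measurable_const))
      (integrable_ramp_comp_mul_ramp_comp (hfm.comp hTn) hfm a b c d) fun x => ?_
    by_cases hx : x ∈ T^[n] ⁻¹' {x | f x ≤ a} ∩ {x | f x ≤ c}
    · rw [indicator_of_mem hx, Pi.one_apply, ramp_eq_one hab hx.1, ramp_eq_one hcd hx.2, one_mul]
    · rw [indicator_of_notMem hx]
      exact mul_nonneg ramp_nonneg ramp_nonneg
  have hprod : (∫ x, ramp a b (f x) ∂μ) * ∫ x, ramp c d (f x) ∂μ
      ≤ μ.real {x | f x ≤ b} * μ.real {x | f x ≤ d} :=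
    mul_le_mul (integral_ramp_comp_le_measureReal hf.continuous hab.le)
      (integral_ramp_comp_le_measureReal hf.continuous hcd.le)
      (integral_nonneg fun _ => ramp_nonneg) measureReal_nonneg
  simp only [Function.comp_apply] at hcorr
  linarith [hcorr.2]

end Sublevel

lemma one_add_div_mul_one_add_div_mul_le {ℓ x y Φ : ℝ} (hx : 0 < x) (hxℓ : x ≤ ℓ) (hy : 0 < y)
    (hyℓ : y ≤ ℓ) (hΦ : 0 ≤ Φ) :
    (1 + ℓ / x) * (1 + ℓ / y) * Φ ≤ 4 * ℓ ^ 2 * Φ / (x * y) := by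
  have hx1 : 1 ≤ ℓ / x := (one_le_div hx).2 hxℓ
  have hy1 : 1 ≤ ℓ / y := (one_le_div hy).2 hyℓ
  calc (1 + ℓ / x) * (1 + ℓ / y) * Φ ≤ (ℓ / x + ℓ / x) * (ℓ / y + ℓ / y) * Φ := by
        gcongr
    _ = 4 * ℓ ^ 2 * Φ / (x * y) := by field_simp; ring

lemma eventually_sub_succ_le {r : ℕ → ℝ} {L : ℝ} (hr : Tendsto r atTop (𝓝 L)) {ε : ℝ}
    (hε : 0 < ε) : ∀ᶠ m in atTop, r m - r (m + 1) ≤ ε := by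
  have h := hr.sub (hr.comp (tendsto_add_atTop_nat 1))
  rw [sub_self] at h
  exact h.eventually_le_const hε

theorem intersection_of_sublevel_preimages_general
    {X : Type*} [MetricSpace X] [MeasurableSpace X] [BorelSpace X]
    (μ : Measure X) [IsProbabilityMeasure μ]
    (T : X → X) (hT : MeasurePreserving T μ μ)
    (Φ : ℕ → ℝ) (hΦ0 : ∀ n, 0 ≤ Φ n)
    (hmix : ∀ (φ ψ : X → ℝ) (Kφ Kψ : ℝ≥0) (Cφ Cψ : ℝ),
      LipschitzWith Kφ φ → LipschitzWith Kψ ψ →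
      (∀ x, |φ x| ≤ Cφ) → (∀ x, |ψ x| ≤ Cψ) → ∀ n : ℕ,
      |(∫ x, φ (T^[n] x) * ψ x ∂μ) - (∫ x, φ x ∂μ) * ∫ x, ψ x ∂μ|
        ≤ (Cφ + Kφ) * (Cψ + Kψ) * Φ n)
    (ℓ : ℝ≥0) (f : X → ℝ) (hf : LipschitzWith ℓ f)
    (r : ℕ → ℝ) (hrdec : StrictAnti r)
    (hrlim : Tendsto r atTop (𝓝 (0 : ℝ))) :
    ∃ N : ℕ, ∀ j k : ℕ, N < j → j < k →
      (μ ((T^[k] ⁻¹' {x | f x ≤ r k}) ∩ (T^[j] ⁻¹' {x | f x ≤ r j}))).toReal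
        ≤ (μ {x | f x ≤ r (k - 1)}).toReal * (μ {x | f x ≤ r (j - 1)}).toReal
          + 4 * (ℓ : ℝ) ^ 2 * Φ (k - j) / ((r (k - 1) - r k) * (r (j - 1) - r j)) := by
  obtain rfl | hℓ := eq_zero_or_pos ℓ
  · refine ⟨0, fun j k _ hjk => ?_⟩
    have hconst : ∀ x y, f x = f y := fun x y =>
      dist_le_zero.1 (by simpa using hf.dist_le_mul x y)
    rw [NNReal.coe_zero, zero_pow two_ne_zero, mul_zero, zero_mul, zero_div, add_zero]
    exact measureReal_preimage_sublevel_inter_le_of_const hconst (T^[k]) _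
      (hrdec.antitone (Nat.sub_le k 1)) (hrdec.antitone (by omega))
  obtain ⟨N, hN⟩ := eventually_atTop.1 (eventually_sub_succ_le hrlim hℓ)
  refine ⟨N, fun j k hNj hjk => ?_⟩
  have hgap : ∀ m, N < m → 0 < r (m - 1) - r m ∧ r (m - 1) - r m ≤ ℓ := by
    rintro (_ | m) hm
    · omega
    · rw [Nat.add_sub_cancel]
      exact ⟨sub_pos.2 (hrdec m.lt_succ_self), hN m (by omega)⟩
  have hsub : ∀ m, MeasurableSet {x | f x ≤ r m} := fun m =>
    measurableSet_le hf.continuous.measurable measurable_const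
  rw [hT.measure_iterate_preimage_inter (hsub k) (hsub j) hjk.le]
  refine (measureReal_iterate_preimage_sublevel_inter_le hmix hT.measurable hf
    (hrdec (by omega : k - 1 < k)) (hrdec (by omega : j - 1 < j)) (k - j)).trans ?_
  obtain ⟨hk, hkℓ⟩ := hgap k (by omega)
  obtain ⟨hj, hjℓ⟩ := hgap j hNj
  exact add_le_add le_rfl (one_add_div_mul_one_add_div_mul_le hk hkℓ hj hjℓ (hΦ0 _))

/-- Lemma on intersections of preimages of sublevel sets: if the system has
(superpolynomial) decay of correlations with rate `Φ` with respect to Lipschitz observables,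
`f` is `ℓ`-Lipschitz with sublevel sets `S_r = {x : f x ≤ r}`, `(r n)` is a strictly
decreasing sequence of positive reals tending to `0`, and `A k = T⁻ᵏ(S_{r k})`, then
there is `N` such that for all `k > j > N`,
`μ(A k ∩ A j) ≤ μ(S_{r (k-1)}) μ(S_{r (j-1)}) + 4 ℓ² Φ(k-j) / ((r(k-1) - r k)(r(j-1) - r j))`. -/
theorem intersection_of_sublevel_preimages
    {X : Type*} [MetricSpace X] [MeasurableSpace X] [BorelSpace X]
    (μ : Measure X) [IsProbabilityMeasure μ]
    (T : X → X) (hT : MeasurePreserving T μ μ)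
    (Φ : ℕ → ℝ) (hΦ0 : ∀ n, 0 ≤ Φ n)
    (hΦ : ∀ α : ℝ, 0 < α → Tendsto (fun n : ℕ => (n : ℝ) ^ α * Φ n) atTop (𝓝 0))
    (hmix : ∀ (φ ψ : X → ℝ) (Kφ Kψ : ℝ≥0) (Cφ Cψ : ℝ),
      LipschitzWith Kφ φ → LipschitzWith Kψ ψ →
      (∀ x, |φ x| ≤ Cφ) → (∀ x, |ψ x| ≤ Cψ) → ∀ n : ℕ,
      |(∫ x, φ (T^[n] x) * ψ x ∂μ) - (∫ x, φ x ∂μ) * ∫ x, ψ x ∂μ|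
        ≤ (Cφ + Kφ) * (Cψ + Kψ) * Φ n)
    (ℓ : ℝ≥0) (f : X → ℝ) (hf : LipschitzWith ℓ f) (hf0 : ∀ x, 0 ≤ f x)
    (r : ℕ → ℝ) (hrpos : ∀ n, 0 < r n) (hrdec : StrictAnti r)
    (hrlim : Tendsto r atTop (𝓝 (0 : ℝ))) :
    ∃ N : ℕ, ∀ j k : ℕ, N < j → j < k →
      (μ ((T^[k] ⁻¹' {x | f x ≤ r k}) ∩ (T^[j] ⁻¹' {x | f x ≤ r j}))).toReal
        ≤ (μ {x | f x ≤ r (k - 1)}).toReal * (μ {x | f x ≤ r (j - 1)}).toReal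
          + 4 * (ℓ : ℝ) ^ 2 * Φ (k - j) / ((r (k - 1) - r k) * (r (j - 1) - r j)) :=
  intersection_of_sublevel_preimages_general μ T hT Φ hΦ0 hmix ℓ f hf r hrdec hrlim
end

section
/- Let (X, T, μ) be a measure-preserving dynamical system on a probability space. Let (S_k)_{k≥0} be a decreasing sequence of measurable sets with liminf_{k→∞} log(Σ_{i=0}^{k} μ(S_i)) / log k = z > 0. Set A_k = T^{−k}(S_k), and suppose there are constants c₁, c₂ ≥ 0 and a function Φ : ℕ → [0,∞) with n^α Φ(n) → 0 for every α > 0, such that for all k > j: μ(A_k ∩ A_j) ≤ μ(A_{k−1})·μ(A_{j−1}) + k^{c₁} j^{c₂} Φ(k−j). Define Z_k(x) = Σ_{i=0}^{k} 1_{A_i}(x). Then Z_k / E(Z_k) → 1 both in the L² norm and μ-almost everywhere, where E(Z_k) = ∫ Z_k dμ. -/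
open Filter MeasureTheory Set Topology ENNReal

/-!
Write `E k = ∫ Z k = ∑_{i ≤ k} μ(S i)`. By the growth assumption `E k ≥ k ^ (z/2)` eventually.
Expanding `Var (Z k)` as a double sum of covariances, a pair `j < i ≤ k` at distance more
than `k ^ (z/4)` contributes at most `μ(A (i-1)) μ(A (j-1)) - μ(A i) μ(A j) + k⁻²` (the
superpolynomial decay of `Φ` absorbs the polynomial weights), and these telescoping terms add up
to at most `E k`; each `i` has at most `k ^ (z/4)` closer partners, each contributing at most
`μ(A i)`. Hence `Var (Z k) = O(k ^ (z/4) E k)` and `Var (Z k / E k) = O(k ^ (-z/4))`, which gives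
the `L²` convergence. Along `N n = (n + K) ^ M` with `M z / 4 > 1` these variances are summable,
so `Z (N n) / E (N n) → 1` almost everywhere. Since `Z k` increases with `k` while `E k / k`
decreases (the `S k` are nested), `E (N (n+1)) / E (N n) → 1`, and this fills the gaps.
-/

section Sequences

open Finset

theorem sum_range_sum_range_eq_of_symm {f : ℕ → ℕ → ℝ} (hf : ∀ i j, f i j = f j i) (n : ℕ) :
    ∑ i ∈ range n, ∑ j ∈ range n, f i j
      = ∑ i ∈ range n, f i i + 2 * ∑ i ∈ range n, ∑ j ∈ range i, f i j := by
  induction n with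
  | zero => simp
  | succ n ih =>
    simp only [sum_range_succ, sum_add_distrib, ih, hf n]
    ring

theorem sum_range_sum_range_shift_sub_le {a : ℕ → ℝ} (ha : ∀ i, 0 ≤ a i) (k : ℕ) :
    ∑ i ∈ range (k + 1), ∑ j ∈ range i,
        (a (i - 1) * (if j = 0 then 1 else a (j - 1)) - a i * a j)
      ≤ ∑ i ∈ range (k + 1), a i := by
  have hshift : ∑ i ∈ range (k + 1), ∑ j ∈ range i,
      a (i - 1) * (if j = 0 then 1 else a (j - 1))
        = ∑ i ∈ range k, (a i + ∑ j ∈ range i, a i * a j) := by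
    simp [sum_range_succ', add_comm]
  have hpairs : ∑ i ∈ range k, ∑ j ∈ range i, a i * a j
      ≤ ∑ i ∈ range (k + 1), ∑ j ∈ range i, a i * a j :=
    sum_le_sum_of_subset_of_nonneg (range_subset_range.2 k.le_succ)
      fun i _ _ => sum_nonneg fun j _ => mul_nonneg (ha i) (ha j)
  have hsum : ∑ i ∈ range k, a i ≤ ∑ i ∈ range (k + 1), a i :=
    sum_le_sum_of_subset_of_nonneg (range_subset_range.2 k.le_succ) fun i _ _ => ha i
  rw [sum_congr rfl fun i _ => sum_sub_distrib .., sum_sub_distrib, hshift, sum_add_distrib]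
  linarith

theorem card_filter_range_sub_le (i L : ℕ) : #{j ∈ range i | i - j ≤ L} ≤ L := by
  calc #{j ∈ range i | i - j ≤ L} ≤ #(Ico (i - L) i) :=
        card_le_card fun j hj => by
          rw [mem_filter, Finset.mem_range] at hj
          exact mem_Ico.2 ⟨by omega, hj.1⟩
    _ ≤ L := by rw [Nat.card_Ico]; omega

theorem sum_range_sum_range_sub_mul_le {a : ℕ → ℝ} {m : ℕ → ℕ → ℝ} {k L : ℕ} {δ : ℝ}
    (ha : Antitone a) (ha0 : ∀ i, 0 ≤ a i) (ha1 : a 0 ≤ 1) (hm : ∀ i j, m i j ≤ a i)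
    (hδ : 0 ≤ δ)
    (hfar : ∀ i j, j < i → i ≤ k → L < i - j →
      m i j ≤ a (i - 1) * (if j = 0 then 1 else a (j - 1)) + δ) :
    ∑ i ∈ range (k + 1), ∑ j ∈ range i, (m i j - a i * a j)
      ≤ (L + 1) * ∑ i ∈ range (k + 1), a i + (k + 1) * k * δ := by
  set b : ℕ → ℕ → ℝ := fun i j => a (i - 1) * (if j = 0 then 1 else a (j - 1))
  have hpair : ∀ i ∈ range (k + 1), ∀ j ∈ range i, m i j - a i * a j
      ≤ (if i - j ≤ L then a i else 0) + (b i j - a i * a j) + δ := by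
    intro i hi j hj
    rw [Finset.mem_range] at hi hj
    have hb : a i * a j ≤ b i j := by
      refine mul_le_mul (ha (Nat.sub_le i 1)) ?_ (ha0 j) (ha0 _)
      split_ifs with hj0
      · exact hj0 ▸ ha1
      · exact ha (Nat.sub_le j 1)
    split_ifs with hnear
    · nlinarith [hm i j, ha0 i, ha0 j]
    · linarith [hfar i j hj (by omega) (by omega)]
  have hnear : ∀ i, ∑ j ∈ range i, (if i - j ≤ L then a i else 0) ≤ L * a i := fun i => by
    rw [← sum_filter, sum_const, nsmul_eq_mul]
    exact mul_le_mul_of_nonneg_right (by exact_mod_cast card_filter_range_sub_le i L) (ha0 i)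
  have hcount : ∀ i ∈ range (k + 1), ∑ j ∈ range i, δ ≤ k * δ := fun i hi => by
    rw [sum_const, card_range, nsmul_eq_mul]
    exact mul_le_mul_of_nonneg_right
      (by exact_mod_cast Nat.lt_succ_iff.1 (Finset.mem_range.1 hi)) hδ
  calc ∑ i ∈ range (k + 1), ∑ j ∈ range i, (m i j - a i * a j)
      ≤ ∑ i ∈ range (k + 1), ∑ j ∈ range i,
          ((if i - j ≤ L then a i else 0) + (b i j - a i * a j) + δ) :=
        sum_le_sum fun i hi => sum_le_sum (hpair i hi)
    _ = ∑ i ∈ range (k + 1), ∑ j ∈ range i, (if i - j ≤ L then a i else 0)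
          + ∑ i ∈ range (k + 1), ∑ j ∈ range i, (b i j - a i * a j)
          + ∑ i ∈ range (k + 1), ∑ j ∈ range i, δ := by
        simp only [sum_add_distrib]
    _ ≤ L * ∑ i ∈ range (k + 1), a i + ∑ i ∈ range (k + 1), a i + (k + 1) * (k * δ) := by
        refine add_le_add (add_le_add ?_ (sum_range_sum_range_shift_sub_le ha0 k)) ?_
        · rw [mul_sum]
          exact sum_le_sum fun i _ => hnear i
        · simpa using sum_le_sum hcount
    _ = (L + 1) * ∑ i ∈ range (k + 1), a i + (k + 1) * k * δ := by ring

theorem mul_sum_range_le_mul_sum_range {a : ℕ → ℝ} (ha : Antitone a) (ha0 : ∀ i, 0 ≤ a i)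
    {p q : ℕ} (hpq : p ≤ q) :
    p * ∑ i ∈ range (q + 1), a i ≤ q * ∑ i ∈ range (p + 1), a i := by
  have htail : ∑ i ∈ Ico (p + 1) (q + 1), a i ≤ (q - p : ℕ) * a p := by
    simpa using sum_le_card_nsmul (Ico (p + 1) (q + 1)) a (a p) fun i hi =>
      ha (Nat.le_of_succ_le (mem_Ico.1 hi).1)
  have hhead : (p + 1) * a p ≤ ∑ i ∈ range (p + 1), a i := by
    simpa using card_nsmul_le_sum (range (p + 1)) a (a p) fun i hi =>
      ha (Nat.lt_succ_iff.1 (Finset.mem_range.1 hi))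
  have hqp : ((q - p : ℕ) : ℝ) = q - p := Nat.cast_sub hpq
  have hqp0 : (0 : ℝ) ≤ q - p := by rw [← hqp]; positivity
  rw [hqp] at htail
  rw [← sum_range_add_sum_Ico a (by omega : p + 1 ≤ q + 1)]
  nlinarith [mul_le_mul_of_nonneg_left htail (Nat.cast_nonneg p : (0 : ℝ) ≤ p),
    mul_le_mul_of_nonneg_left hhead hqp0, ha0 p]

end Sequences

theorem tendsto_div_of_subseq {u e : ℕ → ℝ} {N : ℕ → ℕ} (hu : Monotone u)
    (hu0 : ∀ k, 0 ≤ u k) (he : Monotone e) (hN : StrictMono N) (hpos : ∀ n, 0 < e (N n))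
    (h₁ : Tendsto (fun n => u (N n) / e (N n)) atTop (𝓝 1))
    (h₂ : Tendsto (fun n => e (N (n + 1)) / e (N n)) atTop (𝓝 1)) :
    Tendsto (fun k => u k / e k) atTop (𝓝 1) := by
  classical
  have hex : ∀ k, ∃ n, k < N (n + 1) := fun k => ⟨k, hN.id_le (k + 1)⟩
  set ψ : ℕ → ℕ := fun k => Nat.find (hex k)
  have hψ_lt : ∀ k, k < N (ψ k + 1) := fun k => Nat.find_spec (hex k)
  have hψ_le : ∀ k, N 0 ≤ k → N (ψ k) ≤ k := fun k hk => by
    rcases h : ψ k with _ | m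
    · exact hk
    · exact not_lt.1 (Nat.find_min (hex k) (show m < ψ k by omega))
  have hψ : Tendsto ψ atTop atTop := tendsto_atTop_atTop.2 fun n => ⟨N n, fun k hk => by
    by_contra! h
    exact (hψ_lt k).not_ge ((hN.monotone h).trans hk)⟩
  have hlow : Tendsto (fun n => u (N n) / e (N (n + 1))) atTop (𝓝 1) := by
    simpa using (h₁.div h₂ one_ne_zero).congr fun n => by
      simp only [Pi.div_apply]
      field_simp [(hpos n).ne']
  have hup : Tendsto (fun n => u (N (n + 1)) / e (N n)) atTop (𝓝 1) := by
    simpa using ((h₁.comp (tendsto_add_atTop_nat 1)).mul h₂).congr fun n => by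
      simp only [Function.comp_apply]
      field_simp [(hpos (n + 1)).ne']
  refine tendsto_of_tendsto_of_tendsto_of_le_of_le' (hlow.comp hψ) (hup.comp hψ) ?_ ?_ <;>
    filter_upwards [eventually_ge_atTop (N 0)] with k hk
  · exact div_le_div₀ (hu0 k) (hu (hψ_le k hk)) ((hpos _).trans_le (he (hψ_le k hk)))
      (he (hψ_lt k).le)
  · exact div_le_div₀ (hu0 _) (hu (hψ_lt k).le) (hpos _) (he (hψ_le k hk))

theorem tendsto_div_comp_pow {e : ℕ → ℝ} (he : Monotone e)
    (hle : ∀ p q : ℕ, p ≤ q → (p : ℝ) * e q ≤ q * e p) {K M : ℕ}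
    (hpos : ∀ n, 0 < e ((n + K) ^ M)) :
    Tendsto (fun n => e ((n + 1 + K) ^ M) / e ((n + K) ^ M)) atTop (𝓝 1) := by
  have hbase : Tendsto (fun n : ℕ => ((n + 1 + K : ℕ) : ℝ) / (n + K : ℕ)) atTop (𝓝 1) := by
    simpa [add_comm, add_left_comm] using
      tendsto_add_mul_div_add_mul_atTop_nhds ((K : ℝ) + 1) K 1 one_ne_zero
  have hmono : ∀ n, (n + K) ^ M ≤ (n + 1 + K) ^ M := fun n => Nat.pow_le_pow_left (by omega) M
  refine tendsto_of_tendsto_of_tendsto_of_le_of_le' tendsto_const_nhds (by simpa using hbase.pow M)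
    (.of_forall fun n => (one_le_div (hpos n)).2 (he (hmono n))) ?_
  filter_upwards [eventually_ge_atTop 1] with n hn
  have hratio := hle _ _ (hmono n)
  push_cast at hratio
  rw [div_le_iff₀ (hpos n), div_pow, div_mul_eq_mul_div, le_div_iff₀ (by positivity)]
  linarith

theorem eventually_le_rpow_neg {Φ : ℕ → ℝ}
    (hΦ : ∀ α : ℝ, 0 < α → Tendsto (fun n : ℕ => (n : ℝ) ^ α * Φ n) atTop (𝓝 0))
    {β : ℝ} (hβ : 0 < β) : ∀ᶠ n : ℕ in atTop, Φ n ≤ (n : ℝ) ^ (-β) := by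
  filter_upwards [(hΦ β hβ).eventually (ge_mem_nhds one_pos), eventually_ge_atTop 1]
    with n hn hn1
  have hpos : 0 < (n : ℝ) ^ β := Real.rpow_pos_of_pos (by exact_mod_cast hn1) β
  rw [Real.rpow_neg (Nat.cast_nonneg n), ← one_div, le_div_iff₀' hpos]
  exact hn

theorem eventually_rpow_mul_rpow_mul_le {Φ : ℕ → ℝ}
    (hΦ : ∀ α : ℝ, 0 < α → Tendsto (fun n : ℕ => (n : ℝ) ^ α * Φ n) atTop (𝓝 0))
    {c₁ c₂ γ ρ : ℝ} (hc₁ : 0 ≤ c₁) (hc₂ : 0 ≤ c₂) (hγ : 0 < γ) (hρ : 0 < ρ) :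
    ∀ᶠ k : ℕ in atTop, ∀ i j : ℕ, j < i → i ≤ k → (k : ℝ) ^ γ < ((i - j : ℕ) : ℝ) →
      (i : ℝ) ^ c₁ * (j : ℝ) ^ c₂ * Φ (i - j) ≤ (k : ℝ) ^ (-ρ) := by
  set β := (c₁ + c₂ + ρ) / γ
  have hβ : 0 < β := by positivity
  obtain ⟨N₀, hN₀⟩ := eventually_atTop.1 (eventually_le_rpow_neg hΦ hβ)
  filter_upwards [((tendsto_rpow_atTop hγ).comp tendsto_natCast_atTop_atTop).eventually_ge_atTop
    (N₀ : ℝ), eventually_ge_atTop 1] with k hkN hk i j hji hik hgap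
  have hkpos : (0 : ℝ) < k := by exact_mod_cast hk
  have hkγ : 0 < (k : ℝ) ^ γ := Real.rpow_pos_of_pos hkpos γ
  have hgapN : N₀ ≤ i - j := by exact_mod_cast (hkN.trans hgap.le)
  have hi : (i : ℝ) ≤ k := by exact_mod_cast hik
  have hj : (j : ℝ) ≤ k := by exact_mod_cast (hji.le.trans hik)
  calc (i : ℝ) ^ c₁ * (j : ℝ) ^ c₂ * Φ (i - j)
      ≤ (i : ℝ) ^ c₁ * (j : ℝ) ^ c₂ * ((i - j : ℕ) : ℝ) ^ (-β) := by
        gcongr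
        exact hN₀ _ hgapN
    _ ≤ (k : ℝ) ^ c₁ * (k : ℝ) ^ c₂ * ((k : ℝ) ^ γ) ^ (-β) :=
        mul_le_mul (by gcongr) (Real.rpow_le_rpow_of_nonpos hkγ hgap.le (by linarith))
          (by positivity) (by positivity)
    _ = (k : ℝ) ^ (-ρ) := by
        rw [← Real.rpow_mul hkpos.le, ← Real.rpow_add hkpos, ← Real.rpow_add hkpos]
        congr 1
        simp only [β]
        field_simp
        ring

theorem eventually_rpow_le_of_liminf_log_div_log {E : ℕ → ℝ} (hE : ∀ k, 0 ≤ E k) {w z : ℝ}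
    (hw : 0 ≤ w) (hwz : w < z)
    (h : liminf (fun k : ℕ => Real.log (E k) / Real.log k) atTop = z) :
    ∀ᶠ k : ℕ in atTop, (k : ℝ) ^ w ≤ E k := by
  -- a real `liminf` of a sequence that is not bounded below is `0`
  have hbdd : IsBoundedUnder (· ≥ ·) atTop fun k : ℕ => Real.log (E k) / Real.log k := by
    by_contra hb
    linarith [h ▸ Real.liminf_of_not_isBoundedUnder hb]
  filter_upwards [eventually_lt_of_lt_liminf (h ▸ hwz) hbdd, eventually_ge_atTop 2]
    with k hk hk2
  have hlogk : 0 < Real.log k := Real.log_pos (by exact_mod_cast hk2)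
  have hlt : w * Real.log k < Real.log (E k) := (lt_div_iff₀ hlogk).1 hk
  have hEpos : 0 < E k := (hE k).lt_of_ne fun h0 => by
    rw [← h0, Real.log_zero] at hlt
    nlinarith
  rw [Real.rpow_def_of_pos (by positivity), ← Real.exp_log hEpos]
  exact Real.exp_le_exp.2 (by linarith)

section SecondMoment

open ProbabilityTheory

variable {X : Type*} [MeasurableSpace X] {μ : Measure X}

theorem MeasureTheory.MemLp.div_const_sub [IsFiniteMeasure μ] {p : ℝ≥0∞} {f : X → ℝ}
    (hf : MemLp f p μ) {c : ℝ} (d : ℝ) : MemLp (fun x => f x / c - d) p μ :=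
  (hf.mul_const c⁻¹).sub (memLp_const d)

theorem MeasureTheory.MemLp.eLpNorm_two_eq_ofReal_sqrt {f : X → ℝ} (hf : MemLp f 2 μ) :
    eLpNorm f 2 μ = ENNReal.ofReal √(∫ x, f x ^ 2 ∂μ) := by
  rw [hf.eLpNorm_eq_integral_rpow_norm two_ne_zero ofNat_ne_top, Real.sqrt_eq_rpow]
  norm_num [Real.rpow_two, sq_abs]

theorem integral_div_integral_sub_one_sq {Z : X → ℝ} (hZ : MemLp Z 2 μ) (hE : μ[Z] ≠ 0) :
    ∫ x, (Z x / μ[Z] - 1) ^ 2 ∂μ = Var[Z; μ] / μ[Z] ^ 2 := by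
  rw [variance_eq_integral hZ.aemeasurable, ← integral_div]
  congr 1 with x
  field_simp

theorem ae_tendsto_zero_of_summable_integral_sq {Y : ℕ → X → ℝ} (hY : ∀ n, MemLp (Y n) 2 μ)
    (hsum : Summable fun n => ∫ x, Y n x ^ 2 ∂μ) :
    ∀ᵐ x ∂μ, Tendsto (fun n => Y n x) atTop (𝓝 0) := by
  have hY2 : ∀ n, Integrable (fun x => Y n x ^ 2) μ := fun n => (hY n).integrable_sq
  have hnorm : ∀ n, eLpNorm (fun x => Y n x ^ 2) 1 μ = ENNReal.ofReal (∫ x, Y n x ^ 2 ∂μ) := by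
    intro n
    rw [eLpNorm_one_eq_lintegral_enorm, ofReal_integral_eq_lintegral_ofReal (hY2 n)
      (.of_forall fun x => sq_nonneg _)]
    simp [Real.enorm_of_nonneg (sq_nonneg _)]
  have htsum : ∑' n, eLpNorm (fun x => Y n x ^ 2) 1 μ ≠ ∞ := by
    simp only [hnorm]
    rw [← ENNReal.ofReal_tsum_of_nonneg (fun n => integral_nonneg fun x => sq_nonneg _) hsum]
    exact ofReal_ne_top
  filter_upwards [summable_norm_of_tsum_eLpNorm_ne_top le_rfl
    (fun n => (hY2 n).aestronglyMeasurable) htsum] with x hx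
  have hsq : Tendsto (fun n => |Y n x|) atTop (𝓝 0) := by
    simpa [Real.sqrt_sq_eq_abs] using hx.tendsto_atTop_zero.sqrt
  exact (tendsto_zero_iff_abs_tendsto_zero _).2 hsq

theorem tendsto_eLpNorm_div_integral_sub_one [IsFiniteMeasure μ] {Z : ℕ → X → ℝ}
    (hZ : ∀ k, MemLp (Z k) 2 μ) (hE : ∀ᶠ k in atTop, μ[Z k] ≠ 0)
    (hvar : Tendsto (fun k => Var[Z k; μ] / μ[Z k] ^ 2) atTop (𝓝 0)) :
    Tendsto (fun k => eLpNorm (fun x => Z k x / μ[Z k] - 1) 2 μ) atTop (𝓝 0) := by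
  have h0 : Tendsto (fun k => ENNReal.ofReal √(Var[Z k; μ] / μ[Z k] ^ 2)) atTop (𝓝 0) := by
    simpa using ENNReal.tendsto_ofReal hvar.sqrt
  refine h0.congr' (hE.mono fun k hk => ?_)
  dsimp only
  rw [((hZ k).div_const_sub 1).eLpNorm_two_eq_ofReal_sqrt,
    integral_div_integral_sub_one_sq (hZ k) hk]

theorem ae_tendsto_div_integral_of_variance_le [IsFiniteMeasure μ] {Z : ℕ → X → ℝ}
    (hZ : ∀ k, MemLp (Z k) 2 μ) (hmono : ∀ x, Monotone fun k => Z k x)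
    (hnonneg : ∀ k x, 0 ≤ Z k x) (hle : ∀ p q : ℕ, p ≤ q → (p : ℝ) * μ[Z q] ≤ q * μ[Z p])
    {γ C : ℝ} (hγ : 0 < γ)
    (hvar : ∀ᶠ k : ℕ in atTop, 0 < μ[Z k] ∧ Var[Z k; μ] ≤ C * (k : ℝ) ^ (-γ) * μ[Z k] ^ 2) :
    ∀ᵐ x ∂μ, Tendsto (fun k => Z k x / μ[Z k]) atTop (𝓝 1) := by
  have hEmono : Monotone fun k => μ[Z k] := fun p q hpq =>
    integral_mono ((hZ p).integrable one_le_two) ((hZ q).integrable one_le_two)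
      fun x => hmono x hpq
  obtain ⟨K, hK⟩ := eventually_atTop.1 hvar
  set M := ⌊γ⁻¹⌋₊ + 1
  have hM : 1 < M * γ := by
    have := Nat.lt_floor_add_one γ⁻¹
    rwa [inv_lt_iff_one_lt_mul₀ hγ, ← Nat.cast_succ] at this
  have hM0 : M ≠ 0 := Nat.succ_ne_zero _
  set N : ℕ → ℕ := fun n => (n + K) ^ M
  have hNK : ∀ n, K ≤ N n := fun n => (Nat.le_add_left K n).trans (Nat.le_self_pow hM0 _)
  have hN : StrictMono N := fun m n hmn => Nat.pow_lt_pow_left (by omega) hM0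
  have hsum : Summable fun n => ∫ x, (Z (N n) x / μ[Z (N n)] - 1) ^ 2 ∂μ := by
    refine .of_nonneg_of_le (fun n => integral_nonneg fun x => sq_nonneg _) (fun n => ?_)
      (((summable_nat_add_iff K).2
        (Real.summable_nat_rpow.2 (by linarith : -(M * γ) < -1))).mul_left C)
    obtain ⟨hpos, hvarN⟩ := hK _ (hNK n)
    rw [integral_div_integral_sub_one_sq (hZ _) hpos.ne', div_le_iff₀ (by positivity)]
    have hN_rpow : ((N n : ℕ) : ℝ) ^ (-γ) = ((n + K : ℕ) : ℝ) ^ (-(M * γ)) := by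
      rw [Nat.cast_pow, ← Real.rpow_natCast, ← Real.rpow_mul (by positivity), mul_neg]
    rwa [hN_rpow] at hvarN
  filter_upwards [ae_tendsto_zero_of_summable_integral_sq
    (fun n => (hZ (N n)).div_const_sub 1) hsum] with x hx
  exact tendsto_div_of_subseq (hmono x) (hnonneg · x) hEmono hN (fun n => (hK _ (hNK n)).1)
    (by simpa using hx.add_const 1) (tendsto_div_comp_pow hEmono hle fun n => (hK _ (hNK n)).1)

theorem memLp_indicator_one [IsFiniteMeasure μ] {s : Set X} (hs : MeasurableSet s) (p : ℝ≥0∞) :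
    MemLp (s.indicator fun _ => (1 : ℝ)) p μ :=
  memLp_indicator_const p hs 1 (.inr (measure_ne_top μ s))

theorem covariance_indicator_one [IsProbabilityMeasure μ] {s t : Set X} (hs : MeasurableSet s)
    (ht : MeasurableSet t) :
    cov[s.indicator fun _ => 1, t.indicator fun _ => 1; μ]
      = μ.real (s ∩ t) - μ.real s * μ.real t := by
  rw [covariance_eq_sub (memLp_indicator_one hs 2) (memLp_indicator_one ht 2)]
  have hst : ((s.indicator fun _ => (1 : ℝ)) * t.indicator fun _ => 1) = (s ∩ t).indicator 1 :=
    inter_indicator_one.symm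
  simp only [hst, integral_indicator_one (hs.inter ht), integral_indicator_const _ hs,
    integral_indicator_const _ ht, smul_eq_mul, mul_one]

end SecondMoment

noncomputable def hitCount {X : Type*} (A : ℕ → Set X) (k : ℕ) (x : X) : ℝ :=
  ∑ i ∈ Finset.range (k + 1), (A i).indicator (fun _ => 1) x

section HitCount

open Finset ProbabilityTheory

variable {X : Type*} {A : ℕ → Set X}

theorem hitCount_nonneg (k : ℕ) (x : X) : 0 ≤ hitCount A k x :=
  sum_nonneg fun _ _ => indicator_nonneg (fun _ _ => zero_le_one) x

theorem hitCount_mono (x : X) : Monotone fun k => hitCount A k x :=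
  monotone_nat_of_le_succ fun k => by
    simp only [hitCount, sum_range_succ _ (k + 1)]
    exact le_add_of_nonneg_right (indicator_nonneg (fun _ _ => zero_le_one) x)

variable [MeasurableSpace X] {μ : Measure X}

theorem memLp_hitCount [IsFiniteMeasure μ] (hA : ∀ i, MeasurableSet (A i)) (k : ℕ) :
    MemLp (hitCount A k) 2 μ :=
  memLp_finsetSum _ fun i _ => memLp_indicator_one (hA i) 2

theorem integral_hitCount [IsFiniteMeasure μ] (hA : ∀ i, MeasurableSet (A i)) (k : ℕ) :
    μ[hitCount A k] = ∑ i ∈ range (k + 1), μ.real (A i) := by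
  unfold hitCount
  rw [integral_finsetSum _ fun i _ =>
    (memLp_indicator_one (hA i) 1).integrable le_rfl]
  simp only [integral_indicator_const _ (hA _), smul_eq_mul, mul_one]

theorem variance_hitCount [IsProbabilityMeasure μ] (hA : ∀ i, MeasurableSet (A i)) (k : ℕ) :
    Var[hitCount A k; μ] = ∑ i ∈ range (k + 1), ∑ j ∈ range (k + 1),
      (μ.real (A i ∩ A j) - μ.real (A i) * μ.real (A j)) := by
  unfold hitCount
  rw [variance_fun_sum' fun i _ => memLp_indicator_one (hA i) 2]
  simp only [covariance_indicator_one (hA _) (hA _)]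

theorem variance_hitCount_le [IsProbabilityMeasure μ] (hA : ∀ i, MeasurableSet (A i))
    (hanti : Antitone fun i => μ.real (A i)) {k L : ℕ} {δ : ℝ} (hδ : 0 ≤ δ)
    (hfar : ∀ i j, j < i → i ≤ k → L < i - j → μ.real (A i ∩ A j)
      ≤ μ.real (A (i - 1)) * (if j = 0 then 1 else μ.real (A (j - 1))) + δ) :
    Var[hitCount A k; μ] ≤ (2 * L + 3) * μ[hitCount A k] + 2 * ((k + 1) * k * δ) := by
  have hoff := sum_range_sum_range_sub_mul_le hanti (fun i => measureReal_nonneg)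
    measureReal_le_one (fun i j => measureReal_mono inter_subset_left) hδ hfar
  have hdiag : ∑ i ∈ range (k + 1), (μ.real (A i ∩ A i) - μ.real (A i) * μ.real (A i))
      ≤ ∑ i ∈ range (k + 1), μ.real (A i) :=
    sum_le_sum fun i _ => by simp [mul_self_nonneg]
  rw [variance_hitCount hA, integral_hitCount hA, sum_range_sum_range_eq_of_symm fun i j => by
    rw [inter_comm, mul_comm]]
  linarith

theorem tendsto_hitCount_div_integral [IsFiniteMeasure μ] (hA : ∀ i, MeasurableSet (A i))
    (hanti : Antitone fun i => μ.real (A i)) {γ C : ℝ} (hγ : 0 < γ)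
    (hvar : ∀ᶠ k : ℕ in atTop,
      0 < μ[hitCount A k] ∧ Var[hitCount A k; μ] ≤ C * (k : ℝ) ^ (-γ) * μ[hitCount A k] ^ 2) :
    Tendsto (fun k => eLpNorm (fun x => hitCount A k x / μ[hitCount A k] - 1) 2 μ) atTop (𝓝 0) ∧
      ∀ᵐ x ∂μ, Tendsto (fun k => hitCount A k x / μ[hitCount A k]) atTop (𝓝 1) := by
  refine ⟨tendsto_eLpNorm_div_integral_sub_one (memLp_hitCount hA)
    (hvar.mono fun k hk => hk.1.ne') ?_, ae_tendsto_div_integral_of_variance_le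
    (memLp_hitCount hA) hitCount_mono hitCount_nonneg (fun p q hpq => ?_) hγ hvar⟩
  · have hdecay : Tendsto (fun k : ℕ => C * (k : ℝ) ^ (-γ)) atTop (𝓝 0) := by
      simpa using ((tendsto_rpow_neg_atTop hγ).comp tendsto_natCast_atTop_atTop).const_mul C
    refine tendsto_of_tendsto_of_tendsto_of_le_of_le' tendsto_const_nhds hdecay
      (.of_forall fun k => div_nonneg (variance_nonneg _ _) (sq_nonneg _)) ?_
    exact hvar.mono fun k hk => (div_le_iff₀ (pow_pos hk.1 2)).2 hk.2
  · rw [integral_hitCount hA, integral_hitCount hA]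
    exact mul_sum_range_le_mul_sum_range hanti (fun i => measureReal_nonneg) hpq

theorem eventually_variance_hitCount_le [IsProbabilityMeasure μ]
    (hA : ∀ i, MeasurableSet (A i)) (hanti : Antitone fun i => μ.real (A i)) {Φ : ℕ → ℝ}
    (hΦ : ∀ α : ℝ, 0 < α → Tendsto (fun n : ℕ => (n : ℝ) ^ α * Φ n) atTop (𝓝 0))
    {c₁ c₂ : ℝ} (hc₁ : 0 ≤ c₁) (hc₂ : 0 ≤ c₂)
    (hcorr : ∀ j k : ℕ, j < k → μ.real (A k ∩ A j)
      ≤ μ.real (A (k - 1)) * (if j = 0 then 1 else μ.real (A (j - 1)))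
        + (k : ℝ) ^ c₁ * (j : ℝ) ^ c₂ * Φ (k - j))
    {γ : ℝ} (hγ : 0 < γ) (hgrowth : ∀ᶠ k : ℕ in atTop, (k : ℝ) ^ (2 * γ) ≤ μ[hitCount A k]) :
    ∀ᶠ k : ℕ in atTop,
      0 < μ[hitCount A k] ∧ Var[hitCount A k; μ] ≤ 9 * (k : ℝ) ^ (-γ) * μ[hitCount A k] ^ 2 := by
  filter_upwards [eventually_rpow_mul_rpow_mul_le hΦ hc₁ hc₂ hγ two_pos, hgrowth,
    eventually_ge_atTop 1] with k hfar hE hk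
  set E := μ[hitCount A k]
  set t := (k : ℝ) ^ γ
  have hk1 : (1 : ℝ) ≤ k := by exact_mod_cast hk
  have ht1 : 1 ≤ t := Real.one_le_rpow hk1 hγ.le
  have htE : t ^ 2 ≤ E := by rwa [mul_comm, Real.rpow_mul (by positivity), Real.rpow_two] at hE
  have hvar := variance_hitCount_le hA hanti (k := k) (L := ⌊t⌋₊) (δ := (k : ℝ) ^ (-2 : ℝ))
    (by positivity) fun i j hji hik hgap => (hcorr j i hji).trans <| (add_le_add_iff_left _).2
      (hfar i j hji hik ((Nat.floor_lt (by positivity)).1 hgap))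
  have hE0 : 0 < E := by nlinarith
  have hL : (⌊t⌋₊ : ℝ) ≤ t := Nat.floor_le (by positivity)
  have hδ : (k + 1) * k * (k : ℝ) ^ (-2 : ℝ) ≤ 2 := by
    rw [Real.rpow_neg (by positivity), Real.rpow_two, ← div_eq_mul_inv,
      div_le_iff₀ (by positivity)]
    nlinarith
  have htE' : t ≤ E / t := (le_div_iff₀ (by positivity)).2 (by nlinarith)
  refine ⟨hE0, ?_⟩
  calc Var[hitCount A k; μ] ≤ (2 * t + 7) * E := by nlinarith
    _ ≤ 9 * E * t := by nlinarith
    _ ≤ 9 * E * (E / t) := by gcongr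
    _ = 9 * (k : ℝ) ^ (-γ) * E ^ 2 := by
      rw [Real.rpow_neg (by positivity)]
      ring

end HitCount

theorem dynamical_borel_cantelli_general
    {X : Type*} [MeasurableSpace X] (μ : Measure X) [IsProbabilityMeasure μ]
    (T : X → X) (hT : MeasurePreserving T μ μ)
    (S : ℕ → Set X) (hSmeas : ∀ k, MeasurableSet (S k)) (hSdec : ∀ k, S (k + 1) ⊆ S k)
    (z : ℝ) (hz : 0 < z)
    (hgrowth : liminf (fun k : ℕ =>
        Real.log (∑ i ∈ Finset.range (k + 1), (μ (S i)).toReal) / Real.log k) atTop = z)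
    (c₁ c₂ : ℝ) (hc₁ : 0 ≤ c₁) (hc₂ : 0 ≤ c₂)
    (Φ : ℕ → ℝ)
    (hΦ : ∀ α : ℝ, 0 < α → Tendsto (fun n : ℕ => (n : ℝ) ^ α * Φ n) atTop (𝓝 0))
    (A : ℕ → Set X) (hA : ∀ k, A k = T^[k] ⁻¹' S k)
    (hcorr : ∀ j k : ℕ, j < k →
      (μ (A k ∩ A j)).toReal
        ≤ (μ (A (k - 1))).toReal * (if j = 0 then 1 else (μ (A (j - 1))).toReal)
          + (k : ℝ) ^ c₁ * (j : ℝ) ^ c₂ * Φ (k - j))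
    (Z : ℕ → X → ℝ)
    (hZ : ∀ k x, Z k x = ∑ i ∈ Finset.range (k + 1), Set.indicator (A i) (fun _ => (1 : ℝ)) x) :
    Tendsto (fun k : ℕ =>
        eLpNorm (fun x => Z k x / (∫ y, Z k y ∂μ) - 1) 2 μ) atTop (𝓝 0) ∧
    ∀ᵐ x ∂μ, Tendsto (fun k : ℕ => Z k x / (∫ y, Z k y ∂μ)) atTop (𝓝 1) := by
  obtain rfl : Z = hitCount A := funext fun k => funext (hZ k)
  have hAmeas : ∀ k, MeasurableSet (A k) := fun k =>
    hA k ▸ (hT.iterate k).measurable (hSmeas k)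
  have hμA : ∀ k, μ.real (A k) = μ.real (S k) := fun k =>
    hA k ▸ (hT.iterate k).measureReal_preimage (hSmeas k).nullMeasurableSet
  have hanti : Antitone fun k => μ.real (A k) := fun i j hij => by
    simpa only [hμA] using measureReal_mono (antitone_nat_of_succ_le hSdec hij)
  have hE : ∀ᶠ k : ℕ in atTop, (k : ℝ) ^ (2 * (z / 4)) ≤ ∫ x, hitCount A k x ∂μ := by
    simp only [integral_hitCount hAmeas, hμA]
    exact eventually_rpow_le_of_liminf_log_div_log
      (fun k => Finset.sum_nonneg fun i _ => measureReal_nonneg) (by positivity) (by linarith)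
      hgrowth
  exact tendsto_hitCount_div_integral hAmeas hanti (by positivity)
    (eventually_variance_hitCount_le hAmeas hanti hΦ hc₁ hc₂ hcorr (by positivity) hE)

/-- Dynamical Borel–Cantelli lemma: let `(S k)` be a decreasing sequence of measurable sets
with `liminf_k log(Σ_{i≤k} μ(S i))/log k = z > 0`, let `A k = T⁻ᵏ(S k)`, and suppose that for
all `k > j` one has `μ(A k ∩ A j) ≤ μ(A (k-1)) μ(A (j-1)) + k^{c₁} j^{c₂} Φ(k-j)` (with the
convention `A (-1) = X`, hence `μ(A (-1)) = 1` when `j = 0`), where `Φ` has superpolynomial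
decay and `c₁, c₂ ≥ 0`. Then, with `Z k x = Σ_{i=0}^{k} 1_{A i}(x)` and `E(Z k) = ∫ Z k dμ`,
the ratios `Z k / E(Z k)` converge to `1` in the `L²` norm and `μ`-almost everywhere. -/
theorem dynamical_borel_cantelli
    {X : Type*} [MeasurableSpace X] (μ : Measure X) [IsProbabilityMeasure μ]
    (T : X → X) (hT : MeasurePreserving T μ μ)
    (S : ℕ → Set X) (hSmeas : ∀ k, MeasurableSet (S k)) (hSdec : ∀ k, S (k + 1) ⊆ S k)
    (z : ℝ) (hz : 0 < z)
    (hgrowth : liminf (fun k : ℕ =>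
        Real.log (∑ i ∈ Finset.range (k + 1), (μ (S i)).toReal) / Real.log k) atTop = z)
    (c₁ c₂ : ℝ) (hc₁ : 0 ≤ c₁) (hc₂ : 0 ≤ c₂)
    (Φ : ℕ → ℝ) (hΦ0 : ∀ n, 0 ≤ Φ n)
    (hΦ : ∀ α : ℝ, 0 < α → Tendsto (fun n : ℕ => (n : ℝ) ^ α * Φ n) atTop (𝓝 0))
    (A : ℕ → Set X) (hA : ∀ k, A k = T^[k] ⁻¹' S k)
    (hcorr : ∀ j k : ℕ, j < k →
      (μ (A k ∩ A j)).toReal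
        ≤ (μ (A (k - 1))).toReal * (if j = 0 then 1 else (μ (A (j - 1))).toReal)
          + (k : ℝ) ^ c₁ * (j : ℝ) ^ c₂ * Φ (k - j))
    (Z : ℕ → X → ℝ)
    (hZ : ∀ k x, Z k x = ∑ i ∈ Finset.range (k + 1), Set.indicator (A i) (fun _ => (1 : ℝ)) x) :
    Tendsto (fun k : ℕ =>
        eLpNorm (fun x => Z k x / (∫ y, Z k y ∂μ) - 1) 2 μ) atTop (𝓝 0) ∧
    ∀ᵐ x ∂μ, Tendsto (fun k : ℕ => Z k x / (∫ y, Z k y ∂μ)) atTop (𝓝 1) :=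
  dynamical_borel_cantelli_general μ T hT S hSmeas hSdec z hz hgrowth c₁ c₂ hc₁ hc₂ Φ hΦ A hA hcorr
    Z hZ
end

section
/- Let T : X → X be a map, f : X → [0,∞) a function, x ∈ X a point, and set S_r = {y ∈ X : f(y) ≤ r} and τ(x, S_r) = min{n ∈ ℕ⁺ : Tⁿ(x) ∈ S_r}. Suppose that lim_{r→0} log τ(x, S_r) / (−log r) = d for some d ∈ (0, ∞), and that f(Tⁱ(x)) > 0 for every i ≥ 1. Define d_n(x) = min_{1 ≤ i ≤ n} f(Tⁱ(x)). Then limsup_{n→∞} (−log d_n(x)) / log n = 1/d. -/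
open Filter MeasureTheory Set Topology ENNReal

lemma Set.Finite.csInf_le_iff {α : Type*} [ConditionallyCompleteLinearOrder α] {s : Set α}
    (hs : s.Finite) (hne : s.Nonempty) {a : α} : sInf s ≤ a ↔ ∃ b ∈ s, b ≤ a :=
  ⟨fun h => ⟨_, hne.csInf_mem hs, h⟩, fun ⟨_, hb, hba⟩ => (csInf_le hs.bddBelow hb).trans hba⟩

section Orbit

variable {X : Type*} (T : X → X) (x : X)

lemma hitTime_le_coe_iff {S : Set X} {n : ℕ} :
    hitTime T S x ≤ n ↔ ∃ m, 0 < m ∧ m ≤ n ∧ T^[m] x ∈ S := by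
  constructor
  · intro h
    have hne : ((fun n : ℕ => (n : ℕ∞)) '' {n : ℕ | 0 < n ∧ T^[n] x ∈ S}).Nonempty :=
      nonempty_iff_ne_empty.2 fun he => by simp [hitTime, he] at h
    obtain ⟨m, ⟨hm0, hmS⟩, hm⟩ := csInf_mem hne
    exact ⟨m, hm0, Nat.cast_le.1 (hm.trans_le h), hmS⟩
  · rintro ⟨m, hm0, hmn, hmS⟩
    exact (sInf_le ⟨m, ⟨hm0, hmS⟩, rfl⟩ : hitTime T S x ≤ m).trans (Nat.cast_le.2 hmn)

lemma hitTime_sublevel_le_iff (f : X → ℝ) {n : ℕ} (hn : 1 ≤ n) (r : ℝ) :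
    hitTime T {y | f y ≤ r} x ≤ n ↔ sInf ((fun i => f (T^[i] x)) '' Icc 1 n) ≤ r := by
  rw [hitTime_le_coe_iff,
    ((finite_Icc 1 n).image _).csInf_le_iff ⟨_, mem_image_of_mem _ ⟨le_rfl, hn⟩⟩]
  simp only [exists_mem_image, mem_Icc, and_assoc]
  rfl

lemma sInf_orbit_pos {f : X → ℝ} (hpos : ∀ i : ℕ, 1 ≤ i → 0 < f (T^[i] x)) {n : ℕ}
    (hn : 1 ≤ n) :
    0 < sInf ((fun i => f (T^[i] x)) '' Icc 1 n) := by
  obtain ⟨i, hi, hmin⟩ := ((nonempty_Icc.2 hn).image (fun i => f (T^[i] x))).csInf_mem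
    ((finite_Icc 1 n).image _)
  exact hmin ▸ hpos i hi.1

end Orbit

lemma ENNReal.log_div_lt_iff {t : ℝ≥0∞} {s : ℝ} (hs : 0 < s) (c : ℝ) :
    ENNReal.log t / (s : EReal) < c ↔ t < ENNReal.ofReal (Real.exp (c * s)) := by
  rw [EReal.div_lt_iff (by exact_mod_cast hs) (EReal.coe_ne_top s), ← EReal.coe_mul,
    ← ENNReal.log_lt_log_iff, ENNReal.log_ofReal_of_pos (Real.exp_pos _), Real.log_exp]

lemma ENNReal.lt_log_div_iff {t : ℝ≥0∞} {s : ℝ} (hs : 0 < s) (c : ℝ) :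
    (c : EReal) < ENNReal.log t / (s : EReal) ↔ ENNReal.ofReal (Real.exp (c * s)) < t := by
  rw [EReal.lt_div_iff (by exact_mod_cast hs) (EReal.coe_ne_top s), ← EReal.coe_mul,
    ← ENNReal.log_lt_log_iff, ENNReal.log_ofReal_of_pos (Real.exp_pos _), Real.log_exp]

lemma tendsto_exp_neg_log_div {c : ℝ} (hc : 0 < c) :
    Tendsto (fun n : ℕ => Real.exp (-(Real.log n / c))) atTop (𝓝[>] 0) :=
  Real.tendsto_exp_atBot_nhdsGT.comp <| tendsto_neg_atTop_atBot.comp <|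
    (Real.tendsto_log_atTop.comp tendsto_natCast_atTop_atTop).atTop_div_const hc

noncomputable def hitExponentRatio (τ : ℝ → ℕ∞) (r : ℝ) : EReal :=
  ENNReal.log (τ r : ℝ≥0∞) / ((-Real.log r : ℝ) : EReal)

section Duality

variable {τ : ℝ → ℕ∞} {D : ℕ → ℝ}

lemma eventually_inv_le_neg_log_div_log (hdual : ∀ n : ℕ, 1 ≤ n → ∀ r, τ r ≤ n ↔ D n ≤ r)
    (hD : ∀ n : ℕ, 1 ≤ n → 0 < D n) {c : ℝ} (hc : 0 < c)
    (h : ∀ᶠ r in 𝓝[>] 0, hitExponentRatio τ r < c) :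
    ∀ᶠ n : ℕ in atTop, 1 / c ≤ -Real.log (D n) / Real.log n := by
  filter_upwards [(tendsto_exp_neg_log_div hc).eventually h, eventually_ge_atTop 2] with n hr hn
  have hlogn : 0 < Real.log n := Real.log_pos (by exact_mod_cast hn)
  have hs : 0 < Real.log n / c := div_pos hlogn hc
  rw [hitExponentRatio, Real.log_exp, neg_neg, ENNReal.log_div_lt_iff hs,
    mul_div_cancel₀ _ hc.ne', Real.exp_log (by positivity), ENNReal.ofReal_natCast,
    ← ENat.toENNReal_coe, ENat.toENNReal_lt] at hr
  have hDn : Real.log (D n) ≤ -(Real.log n / c) :=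
    (Real.log_le_iff_le_exp (hD n (by omega))).2 ((hdual n (by omega) _).1 hr.le)
  rw [le_div_iff₀ hlogn]
  linarith [show 1 / c * Real.log n = Real.log n / c by ring]

lemma eventually_neg_log_div_log_le_inv (hdual : ∀ n : ℕ, 1 ≤ n → ∀ r, τ r ≤ n ↔ D n ≤ r)
    (hD : ∀ n : ℕ, 1 ≤ n → 0 < D n) {c : ℝ} (hc : 0 < c)
    (h : ∀ᶠ r in 𝓝[>] 0, c < hitExponentRatio τ r) :
    ∀ᶠ n : ℕ in atTop, -Real.log (D n) / Real.log n ≤ 1 / c := by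
  filter_upwards [(tendsto_exp_neg_log_div hc).eventually h, eventually_ge_atTop 2] with n hr hn
  have hlogn : 0 < Real.log n := Real.log_pos (by exact_mod_cast hn)
  have hs : 0 < Real.log n / c := div_pos hlogn hc
  rw [hitExponentRatio, Real.log_exp, neg_neg, ENNReal.lt_log_div_iff hs,
    mul_div_cancel₀ _ hc.ne', Real.exp_log (by positivity), ENNReal.ofReal_natCast,
    ← ENat.toENNReal_coe, ENat.toENNReal_lt] at hr
  have hDn : -(Real.log n / c) < Real.log (D n) :=
    (Real.lt_log_iff_exp_lt (hD n (by omega))).2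
      (not_le.1 fun hle => hr.not_ge ((hdual n (by omega) _).2 hle))
  rw [div_le_iff₀ hlogn]
  linarith [show 1 / c * Real.log n = Real.log n / c by ring]

theorem tendsto_neg_log_div_log_of_hitExponentRatio
    (hdual : ∀ n : ℕ, 1 ≤ n → ∀ r, τ r ≤ n ↔ D n ≤ r) (hD : ∀ n : ℕ, 1 ≤ n → 0 < D n)
    {d : ℝ} (hd : 0 < d) (hlim : Tendsto (hitExponentRatio τ) (𝓝[>] 0) (𝓝 (d : EReal))) :
    Tendsto (fun n : ℕ => -Real.log (D n) / Real.log n) atTop (𝓝 (1 / d)) := by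
  refine tendsto_order.2 ⟨fun a ha => ?_, fun b hb => ?_⟩
  · obtain ⟨b, hab, hbd⟩ := exists_between (max_lt ha (one_div_pos.2 hd))
    have hb : 0 < b := (le_max_right a 0).trans_lt hab
    have hdc : d < 1 / b := (lt_one_div hb hd).1 hbd
    filter_upwards [eventually_inv_le_neg_log_div_log hdual hD (one_div_pos.2 hb)
      (hlim.eventually (gt_mem_nhds (EReal.coe_lt_coe_iff.2 hdc)))] with n hn
    rw [one_div_one_div] at hn
    exact ((le_max_left a 0).trans_lt hab).trans_le hn
  · obtain ⟨a, hda, hab⟩ := exists_between hb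
    have ha : 0 < a := (one_div_pos.2 hd).trans hda
    have hcd : 1 / a < d := (one_div_lt hd ha).1 hda
    filter_upwards [eventually_neg_log_div_log_le_inv hdual hD (one_div_pos.2 ha)
      (hlim.eventually (lt_mem_nhds (EReal.coe_lt_coe_iff.2 hcd)))] with n hn
    rw [one_div_one_div] at hn
    exact hn.trans_lt hab

end Duality

theorem hitting_exponent_to_approach_rate_general
    {X : Type*} (T : X → X) (f : X → ℝ) (x : X)
    (d : ℝ) (hd : 0 < d)
    (hlim : Tendsto (fun r : ℝ =>
        ENNReal.log ((hitTime T {y | f y ≤ r} x : ℝ≥0∞)) / ((- Real.log r : ℝ) : EReal))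
      (𝓝[>] 0) (𝓝 (d : EReal)))
    (hpos : ∀ i : ℕ, 1 ≤ i → 0 < f (T^[i] x)) :
    limsup (fun n : ℕ =>
        (- Real.log (sInf ((fun i : ℕ => f (T^[i] x)) '' Set.Icc 1 n))) / Real.log n)
      atTop = 1 / d :=
  (tendsto_neg_log_div_log_of_hitExponentRatio
    (fun _ => hitTime_sublevel_le_iff T x f) (fun _ => sInf_orbit_pos T x hpos)
    hd hlim).limsup_eq

/-- Pointwise translation between the hitting-time exponent and the rate of approach of the
orbit: if `lim_{r→0} log τ(x,S_r)/(-log r) = d ∈ (0,∞)` for the sublevel sets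
`S_r = {y : f y ≤ r}` of `f : X → [0,∞)`, and `f(Tⁱ x) > 0` for all `i ≥ 1`, then with
`d_n(x) = min_{1 ≤ i ≤ n} f(Tⁱ x)` one has `limsup_{n→∞} (-log d_n(x))/log n = 1/d`. -/
theorem hitting_exponent_to_approach_rate
    {X : Type*} (T : X → X) (f : X → ℝ) (hf0 : ∀ x, 0 ≤ f x) (x : X)
    (d : ℝ) (hd : 0 < d)
    (hlim : Tendsto (fun r : ℝ =>
        ENNReal.log ((hitTime T {y | f y ≤ r} x : ℝ≥0∞)) / ((- Real.log r : ℝ) : EReal))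
      (𝓝[>] 0) (𝓝 (d : EReal)))
    (hpos : ∀ i : ℕ, 1 ≤ i → 0 < f (T^[i] x)) :
    limsup (fun n : ℕ =>
        (- Real.log (sInf ((fun i : ℕ => f (T^[i] x)) '' Set.Icc 1 n))) / Real.log n)
      atTop = 1 / d :=
  hitting_exponent_to_approach_rate_general T f x d hd hlim hpos
end
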